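/- arXiv:2009.09202 — 8 statements merged into one kernel-verified Lean document; each statement's English description precedes it below -/
import Mathlib

section
/- For every path P_n on n ≥ 1 vertices, the Italian domination number of P_n equals ⌈(n+1)/2⌉. -/
open Finset
open scoped Classical

/-- An Italian dominating function: `f : V → {0,1,2}` such that every vertex with
value 0 has neighbours of total weight at least 2. -/
def IsIDF {V : Type*} [Fintype V] (G : SimpleGraph V) (f : V → ℕ) : Prop :=
  (∀ v, f v ≤ 2) ∧
  ∀ v, f v = 0 → 2 ≤ ∑ u ∈ Finset.univ.filter fun u => G.Adj v u, f u

/-- The Italian domination number: minimum weight of an IDF. -/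
noncomputable def italianDomNumber {V : Type*} [Fintype V] (G : SimpleGraph V) : ℕ :=
  sInf {w | ∃ f, IsIDF G f ∧ ∑ v, f v = w}

/-- A perfect Italian dominating function: every vertex with value 0 has neighbours
of total weight exactly 2. -/
def IsPIDF {V : Type*} [Fintype V] (G : SimpleGraph V) (f : V → ℕ) : Prop :=
  (∀ v, f v ≤ 2) ∧
  ∀ v, f v = 0 → (∑ u ∈ Finset.univ.filter fun u => G.Adj v u, f u) = 2

/-- The perfect Italian domination number. -/
noncomputable def perfectItalianDomNumber {V : Type*} [Fintype V] (G : SimpleGraph V) : ℕ :=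
  sInf {w | ∃ f, IsPIDF G f ∧ ∑ v, f v = w}

/-- The Sierpiński graph `S(K_n, t)` on words of length `t` over an alphabet of size `n`. -/
def sierpinskiGraph (n t : ℕ) : SimpleGraph (Fin t → Fin n) :=
  SimpleGraph.fromRel (fun u v => ∃ i : Fin t,
    (∀ j, j < i → u j = v j) ∧ u i ≠ v i ∧ ∀ j, i < j → u j = v i ∧ v j = u i)

/-! ### Auxiliary machinery for the path graph -/

/-- Extend a function on `Fin n` by zero to all of `ℕ`. -/
def fe (n : ℕ) (f : Fin n → ℕ) (k : ℕ) : ℕ := if h : k < n then f ⟨k, h⟩ else 0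

lemma sum_ind (n : ℕ) (f : Fin n → ℕ) (c : ℕ) :
    ∑ u : Fin n, (if u.val = c then f u else 0) = fe n f c := by
  by_cases h : c < n
  · rw [fe, dif_pos h, Finset.sum_eq_single (⟨c, h⟩ : Fin n)]
    · simp
    · intro b _ hb
      rw [if_neg]; intro hc; exact hb (Fin.ext hc)
    · simp
  · rw [fe, dif_neg h]
    apply Finset.sum_eq_zero
    intro u _
    rw [if_neg]; intro hc; exact h (hc ▸ u.isLt)

/-- The neighbourhood sum in the path graph. -/
lemma nbrSum (n : ℕ) (f : Fin n → ℕ) (i : Fin n) :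
    ∑ u ∈ Finset.univ.filter (fun u => (SimpleGraph.pathGraph n).Adj i u), f u
      = fe n f (i.val + 1) + (if i.val = 0 then 0 else fe n f (i.val - 1)) := by
  rw [Finset.sum_filter]
  have key : ∀ u : Fin n, (if (SimpleGraph.pathGraph n).Adj i u then f u else 0)
      = (if u.val = i.val + 1 then f u else 0)
        + (if (¬ i.val = 0) ∧ u.val = i.val - 1 then f u else 0) := by
    intro u
    rw [SimpleGraph.pathGraph_adj]
    split_ifs <;> omega
  rw [Finset.sum_congr rfl (fun u _ => key u), Finset.sum_add_distrib, sum_ind]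
  congr 1
  by_cases h0 : i.val = 0
  · rw [if_pos h0]
    exact Finset.sum_eq_zero fun u _ => by rw [if_neg]; tauto
  · rw [if_neg h0, ← sum_ind n f (i.val - 1)]
    exact Finset.sum_congr rfl fun u _ => by split_ifs <;> tauto

/-- An abstract Italian dominating sequence for a path on `n` vertices. -/
def IDFN (n : ℕ) (g : ℕ → ℕ) : Prop :=
  (∀ k, n ≤ k → g k = 0) ∧
  ∀ k, k < n → g k = 0 → 2 ≤ (if k = 0 then 0 else g (k - 1)) + g (k + 1)

/-- The lower bound, by strong induction. -/
lemma idfn_lb : ∀ n, ∀ g : ℕ → ℕ, 1 ≤ n → IDFN n g → n / 2 + 1 ≤ ∑ k ∈ range n, g k := by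
  intro n
  induction n using Nat.strong_induction_on with
  | _ n IH =>
    intro g hn hg
    obtain ⟨hz, hc⟩ := hg
    match n, hn with
    | 1, _ =>
      have h0 : 1 ≤ g 0 := by
        by_contra h
        have h1 := hc 0 (by omega) (by omega)
        have h2 := hz 1 (by omega)
        simp at h1
        omega
      simpa using h0
    | 2, _ =>
      have hsum : ∑ k ∈ range 2, g k = g 0 + g 1 := by
        simp [Finset.sum_range_succ]
      rw [hsum]
      by_cases h1 : g 1 = 0
      · have ha := hc 1 (by omega) h1
        have hb := hz 2 (by omega)
        simp at ha
        omega
      · by_cases h0 : g 0 = 0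
        · have ha := hc 0 (by omega) h0
          simp at ha
          omega
        · omega
    | (m + 3), _ =>
      set g' : ℕ → ℕ := fun k => if k = m then max (g m) 1 else if k < m then g k else 0 with hg'
      have hg'idfn : IDFN (m + 1) g' := by
        constructor
        · intro k hk
          simp only [hg']
          rw [if_neg (by omega), if_neg (by omega)]
        · intro k hk hk0
          have hkm : k ≠ m := by
            intro h
            simp only [hg', h, if_pos rfl] at hk0
            omega
          have hklt : k < m := by omega
          have hgk : g k = 0 := by
            simpa only [hg', if_neg hkm, if_pos hklt] using hk0
          have horig := hc k (by omega) hgk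
          have hprev : (if k = 0 then 0 else g' (k - 1)) = (if k = 0 then 0 else g (k - 1)) := by
            by_cases h0 : k = 0
            · simp [h0]
            · rw [if_neg h0, if_neg h0]
              simp only [hg']
              rw [if_neg (by omega), if_pos (by omega)]
          have hnext : g (k + 1) ≤ g' (k + 1) := by
            by_cases h1 : k + 1 = m
            · simp only [hg', if_pos h1, h1]
              exact le_max_left _ _
            · simp only [hg']
              rw [if_neg h1, if_pos (by omega)]
          rw [hprev]
          omega
      have hIH := IH (m + 1) (by omega) g' (by omega) hg'idfn
      have hs1 : ∑ k ∈ range (m + 1), g' k = (∑ k ∈ range m, g k) + max (g m) 1 := by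
        rw [Finset.sum_range_succ]
        congr 1
        · apply Finset.sum_congr rfl
          intro k hk
          rw [Finset.mem_range] at hk
          simp only [hg']
          rw [if_neg (by omega), if_pos hk]
        · simp [hg']
      have hs2 : ∑ k ∈ range (m + 3), g k
          = (∑ k ∈ range m, g k) + g m + g (m + 1) + g (m + 2) := by
        rw [Finset.sum_range_succ, Finset.sum_range_succ, Finset.sum_range_succ]
      rw [hs2]
      rw [hs1] at hIH
      have hmax1 : 1 ≤ max (g m) 1 := le_max_right _ _
      have hmax2 : g m ≤ max (g m) 1 := le_max_left _ _
      have hmax3 : max (g m) 1 ≤ g m + 1 := by omega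
      by_cases hs : 2 ≤ g (m + 1) + g (m + 2)
      · omega
      · have hlast : g (m + 2) ≠ 0 := by
          intro h
          have ha := hc (m + 2) (by omega) h
          have hb := hz (m + 3) (by omega)
          rw [if_neg (by omega)] at ha
          have ha' : 2 ≤ g (m + 1) + g (m + 3) := by simpa using ha
          omega
        have h1 : g (m + 2) = 1 ∧ g (m + 1) = 0 := by omega
        have ha := hc (m + 1) (by omega) h1.2
        rw [if_neg (by omega)] at ha
        have ha' : 2 ≤ g m + g (m + 2) := by simpa using ha
        omega

/-- Every IDF of the path graph gives an abstract one. -/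
lemma idfn_of_idf (n : ℕ) (f : Fin n → ℕ) (h : IsIDF (SimpleGraph.pathGraph n) f) :
    IDFN n (fe n f) := by
  constructor
  · intro k hk
    rw [fe, dif_neg (by omega)]
  · intro k hk hk0
    have hf0 : f ⟨k, hk⟩ = 0 := by
      rw [fe, dif_pos hk] at hk0; exact hk0
    have := h.2 ⟨k, hk⟩ hf0
    rw [nbrSum] at this
    simpa [Nat.add_comm] using this

lemma sum_fe (n : ℕ) (f : Fin n → ℕ) : ∑ v, f v = ∑ k ∈ range n, fe n f k := by
  rw [← Fin.sum_univ_eq_sum_range (fe n f) n]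
  apply Finset.sum_congr rfl
  intro i _
  rw [fe, dif_pos i.isLt]

/-- The explicit optimal IDF on the path. -/
lemma ub_exists (n : ℕ) (hn : 1 ≤ n) :
    ∃ f : Fin n → ℕ, IsIDF (SimpleGraph.pathGraph n) f ∧ ∑ v, f v = (n + 2) / 2 := by
  refine ⟨fun i => if i.val % 2 = 0 ∨ i.val + 1 = n then 1 else 0, ⟨?_, ?_⟩, ?_⟩
  · intro v; dsimp only; split_ifs <;> omega
  · intro v hv
    dsimp only at hv ⊢
    have hcond : ¬(v.val % 2 = 0 ∨ v.val + 1 = n) := by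
      intro h; rw [if_pos h] at hv; omega
    push_neg at hcond
    obtain ⟨hodd, hlast⟩ := hcond
    have h1 : 1 ≤ v.val := by omega
    have h2 : v.val + 1 < n := by have := v.isLt; omega
    rw [nbrSum, if_neg (by omega)]
    have e1 : fe n (fun i : Fin n => if i.val % 2 = 0 ∨ i.val + 1 = n then 1 else 0) (v.val + 1) = 1 := by
      rw [fe, dif_pos h2, if_pos]
      left; show (v.val + 1) % 2 = 0; omega
    have e2 : fe n (fun i : Fin n => if i.val % 2 = 0 ∨ i.val + 1 = n then 1 else 0) (v.val - 1) = 1 := by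
      rw [fe, dif_pos (by omega : v.val - 1 < n), if_pos]
      left; show (v.val - 1) % 2 = 0; omega
    rw [e1, e2]
  · rw [Fin.sum_univ_eq_sum_range (fun k => if k % 2 = 0 ∨ k + 1 = n then 1 else 0) n]
    have key : ∀ k, (if k % 2 = 0 ∨ k + 1 = n then 1 else 0)
        = (if k % 2 = 0 then 1 else 0) + (if k = n - 1 then (if n % 2 = 0 then 1 else 0) else 0) := by
      intro k
      split_ifs <;> omega
    rw [Finset.sum_congr rfl fun k _ => key k, Finset.sum_add_distrib]
    have hE : ∀ N : ℕ, ∑ k ∈ range N, (if k % 2 = 0 then 1 else 0) = (N + 1) / 2 := by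
      intro N
      induction N with
      | zero => simp
      | succ N ih =>
        rw [Finset.sum_range_succ, ih]
        split_ifs <;> omega
    rw [hE]
    rw [Finset.sum_ite_eq' (range n) (n - 1)]
    rw [if_pos (Finset.mem_range.mpr (by omega))]
    split_ifs <;> omega


theorem italianDom_path (n : ℕ) (hn : 1 ≤ n) :
    italianDomNumber (SimpleGraph.pathGraph n) = (n + 2) / 2 := by
  obtain ⟨f0, hf0, hs0⟩ := ub_exists n hn
  apply le_antisymm
  · exact Nat.sInf_le ⟨f0, hf0, hs0⟩
  · refine le_csInf ⟨(n + 2) / 2, f0, hf0, hs0⟩ ?_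
    rintro w ⟨f, hf, rfl⟩
    have hlb := idfn_lb n (fe n f) hn (idfn_of_idf n f hf)
    have hsum := sum_fe n f
    omega
end

section
/- If G is a connected graph of order n ≥ 3, then the Italian domination number of G satisfies γ_I(G) ≤ 3n/4. -/
open Finset
open scoped Classical

set_option linter.unusedSectionVars false
set_option maxHeartbeats 1000000

namespace ItalianAux

universe u

variable {V : Type u} [Fintype V]

/-- tree neighbours of `v` w.r.t. parent map `p` -/
noncomputable def tnbr (p : V → V) (v : V) : Finset V :=
  univ.filter (fun u => (p u = v ∧ u ≠ v) ∨ (p v = u ∧ u ≠ v))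

noncomputable def children (p : V → V) (v : V) : Finset V :=
  univ.filter (fun u => p u = v ∧ u ≠ v)

noncomputable def desc (p : V → V) (u : V) : Finset V :=
  univ.filter (fun v => ∃ k, p^[k] v = u)

lemma mem_tnbr {p : V → V} {v u : V} :
    u ∈ tnbr p v ↔ (p u = v ∧ u ≠ v) ∨ (p v = u ∧ u ≠ v) := by
  simp [tnbr]

lemma mem_children {p : V → V} {v u : V} :
    u ∈ children p v ↔ p u = v ∧ u ≠ v := by simp [children]

lemma mem_desc {p : V → V} {u v : V} : v ∈ desc p u ↔ ∃ k, p^[k] v = u := by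
  simp [desc]

lemma self_mem_desc (p : V → V) (u : V) : u ∈ desc p u := mem_desc.2 ⟨0, rfl⟩

lemma children_subset_desc {p : V → V} {u c : V} (hc : c ∈ children p u) :
    c ∈ desc p u := mem_desc.2 ⟨1, (mem_children.1 hc).1⟩

lemma desc_step {p : V → V} {u v : V} (hv : v ∈ desc p u) (hne : v ≠ u) :
    p v ∈ desc p u := by
  obtain ⟨k, hk⟩ := mem_desc.1 hv
  cases k with
  | zero => exact absurd hk hne
  | succ k => exact mem_desc.2 ⟨k, by rwa [Function.iterate_succ_apply] at hk⟩

lemma compl_closed {p : V → V} {u v : V} (hv : v ∉ desc p u) : p v ∉ desc p u := by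
  intro h
  obtain ⟨k, hk⟩ := mem_desc.1 h
  exact hv (mem_desc.2 ⟨k + 1, by rwa [Function.iterate_succ_apply]⟩)

lemma root_mem_desc {p : V → V} {r u : V} (hpr : p r = r) (h : r ∈ desc p u) :
    u = r := by
  obtain ⟨k, hk⟩ := mem_desc.1 h
  rw [Function.iterate_fixed hpr] at hk
  exact hk.symm

lemma desc_depth {r : V} {p : V → V} {d : V → ℕ} (hpr : p r = r)
    (hd : ∀ v, v ≠ r → d (p v) + 1 = d v) {u : V} :
    ∀ v ∈ desc p u, v ≠ u → d u < d v := by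
  have main : ∀ m : ℕ, ∀ v ∈ desc p u, v ≠ u → d v = m → d u < d v := by
    intro m
    induction m using Nat.strong_induction_on with
    | _ m IH =>
      intro v hv hne hdv
      have hvr : v ≠ r := by
        rintro rfl
        exact hne (root_mem_desc hpr hv).symm
      have hstep := desc_step hv hne
      have hdd : d (p v) + 1 = d v := hd v hvr
      by_cases hpu : p v = u
      · rw [← hpu]; omega
      · have := IH (d (p v)) (by omega) (p v) hstep hpu rfl
        omega
  exact fun v hv hne => main (d v) v hv hne rfl

lemma desc_root {r : V} {p : V → V} {d : V → ℕ}
    (hd : ∀ v, v ≠ r → d (p v) + 1 = d v) (v : V) : v ∈ desc p r := by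
  have main : ∀ m : ℕ, ∀ v : V, d v = m → v ∈ desc p r := by
    intro m
    induction m using Nat.strong_induction_on with
    | _ m IH =>
      intro v hdv
      by_cases hvr : v = r
      · rw [hvr]; exact self_mem_desc p r
      · have hdd := hd v hvr
        have hp := IH (d (p v)) (by omega) (p v) rfl
        obtain ⟨k, hk⟩ := mem_desc.1 hp
        exact mem_desc.2 ⟨k + 1, by rwa [Function.iterate_succ_apply]⟩
  exact main (d v) v rfl

lemma children_depth {r : V} {p : V → V} {d : V → ℕ} (hpr : p r = r)
    (hd : ∀ v, v ≠ r → d (p v) + 1 = d v) {w c : V} (hc : c ∈ children p w) :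
    d c = d w + 1 := by
  obtain ⟨hpc, hne⟩ := mem_children.1 hc
  have hcr : c ≠ r := by
    rintro rfl
    rw [hpr] at hpc
    exact hne hpc
  have := hd c hcr
  rw [hpc] at this
  omega


lemma fix_eq_root {r : V} {p : V → V} {d : V → ℕ}
    (hd : ∀ v, v ≠ r → d (p v) + 1 = d v) {x : V} (hx : p x = x) : x = r := by
  by_contra h
  have := hd x h
  rw [hx] at this
  omega

lemma depth_zero_eq_root {r : V} {p : V → V} {d : V → ℕ}
    (hd : ∀ v, v ≠ r → d (p v) + 1 = d v) {x : V} (hx : d x = 0) : x = r := by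
  by_contra h
  have := hd x h
  omega

lemma le_sum_pair {f : V → ℕ} {s : Finset V} {a b : V} (ha : a ∈ s) (hb : b ∈ s)
    (hab : a ≠ b) : f a + f b ≤ ∑ x ∈ s, f x := by
  have hsub : {a, b} ⊆ s := by
    intro x hx
    rcases Finset.mem_insert.1 hx with rfl | hx
    · exact ha
    · rw [Finset.mem_singleton.1 hx]; exact hb
  calc f a + f b = ∑ x ∈ ({a, b} : Finset V), f x := (Finset.sum_pair hab).symm
    _ ≤ ∑ x ∈ s, f x := Finset.sum_le_sum_of_subset hsub

lemma splice {n : ℕ} {r : V} {p : V → V} {d : V → ℕ}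
    (IH : ∀ m, m < n → ∀ (W : Type u) [Fintype W], ∀ (r : W) (p : W → W) (d : W → ℕ),
      Fintype.card W = m → p r = r → d r = 0 → (∀ v, v ≠ r → d (p v) + 1 = d v) → 3 ≤ m →
      ∃ f : W → ℕ, (∀ v, f v ≤ 2) ∧ (∀ v, f v = 0 → 2 ≤ ∑ u ∈ tnbr p v, f u) ∧
        4 * ∑ v, f v ≤ 3 * m)
    (hcard : Fintype.card V = n) (hpr : p r = r) (hdr : d r = 0)
    (hd : ∀ v, v ≠ r → d (p v) + 1 = d v)
    (S : Finset V) (hScl : ∀ v, v ∉ S → p v ∉ S) (hrS : r ∉ S) (hS : S.Nonempty)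
    (h3 : 3 ≤ Sᶜ.card) :
    ∃ g : V → ℕ, (∀ v, g v ≤ 2) ∧ (∀ v ∈ S, g v = 0) ∧
      (∀ v, v ∉ S → g v = 0 → 2 ≤ ∑ u ∈ (tnbr p v).filter (fun u => u ∉ S), g u) ∧
      4 * ∑ v, g v ≤ 3 * Sᶜ.card := by
  classical
  have hmem : ∀ x : V, x ∈ Sᶜ ↔ x ∉ S := fun x => Finset.mem_compl
  have hrT : r ∈ Sᶜ := (hmem r).2 hrS
  have hpT : ∀ x : V, x ∈ Sᶜ → p x ∈ Sᶜ := fun x hx => (hmem _).2 (hScl x ((hmem x).1 hx))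
  have hWcard : Fintype.card {x : V // x ∈ Sᶜ} = Sᶜ.card := Fintype.card_coe Sᶜ
  have hlt : Sᶜ.card < n := by
    have h1 := Finset.card_add_card_compl S
    rw [hcard] at h1
    have h2 := hS.card_pos
    omega
  obtain ⟨f', hf2, hfc, hfs⟩ := IH Sᶜ.card hlt {x : V // x ∈ Sᶜ} ⟨r, hrT⟩
      (fun x => ⟨p x.1, hpT _ x.2⟩) (fun x => d x.1) hWcard (Subtype.ext hpr) hdr
      (fun x hx => hd x.1 (fun h => hx (Subtype.ext h))) h3
  set g : V → ℕ := fun x => if hx : x ∈ Sᶜ then f' ⟨x, hx⟩ else 0 with hg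
  have hgval : ∀ (x : V) (hx : x ∈ Sᶜ), g x = f' ⟨x, hx⟩ := by
    intro x hx; simp only [hg, dif_pos hx]
  have hgS : ∀ v ∈ S, g v = 0 := by
    intro v hv
    simp only [hg]
    rw [dif_neg]
    simp [hv]
  have hsum : ∑ v, g v = ∑ x : {x : V // x ∈ Sᶜ}, f' x := by
    rw [← Finset.sum_subset (Finset.subset_univ Sᶜ)
      (fun x _ hx => by simp only [hg, dif_neg hx])]
    rw [← Finset.sum_attach Sᶜ g, Finset.univ_eq_attach]
    exact Finset.sum_congr rfl (fun x _ => hgval x.1 x.2)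
  refine ⟨g, ?_, hgS, ?_, ?_⟩
  · intro v
    by_cases hv : v ∈ Sᶜ
    · rw [hgval v hv]; exact hf2 _
    · simp only [hg, dif_neg hv]; omega
  · intro v hv hv0
    have hvT : v ∈ Sᶜ := (hmem v).2 hv
    have hf'0 : f' ⟨v, hvT⟩ = 0 := by rw [← hgval v hvT]; exact hv0
    have hle := hfc ⟨v, hvT⟩ hf'0
    have heq : ∑ u ∈ tnbr (fun x : {x : V // x ∈ Sᶜ} => (⟨p x.1, hpT _ x.2⟩ : {x : V // x ∈ Sᶜ})) ⟨v, hvT⟩, f' u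
        = ∑ u ∈ (tnbr p v).filter (fun u => u ∉ S), g u := by
      refine Finset.sum_bij' (i := fun (a : {x : V // x ∈ Sᶜ}) (_ : a ∈ tnbr (fun x : {x : V // x ∈ Sᶜ} => (⟨p x.1, hpT _ x.2⟩ : {x : V // x ∈ Sᶜ})) ⟨v, hvT⟩) => a.1)
        (j := fun (a : V) (ha : a ∈ (tnbr p v).filter (fun u => u ∉ S)) =>
          (⟨a, (hmem a).2 (Finset.mem_filter.1 ha).2⟩ : {x : V // x ∈ Sᶜ}))
        ?_ ?_ ?_ ?_ ?_
      · intro a ha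
        have ha' := mem_tnbr.1 ha
        refine Finset.mem_filter.2 ⟨mem_tnbr.2 ?_, (hmem a.1).1 a.2⟩
        rcases ha' with ⟨h1, h2⟩ | ⟨h1, h2⟩
        · exact Or.inl ⟨congrArg Subtype.val h1, fun hc => h2 (Subtype.ext hc)⟩
        · exact Or.inr ⟨congrArg Subtype.val h1, fun hc => h2 (Subtype.ext hc)⟩
      · intro a ha
        have ha' := mem_tnbr.1 (Finset.mem_filter.1 ha).1
        refine mem_tnbr.2 ?_
        rcases ha' with ⟨h1, h2⟩ | ⟨h1, h2⟩
        · exact Or.inl ⟨Subtype.ext h1, fun hc => h2 (congrArg Subtype.val hc)⟩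
        · exact Or.inr ⟨Subtype.ext h1, fun hc => h2 (congrArg Subtype.val hc)⟩
      · intro a ha; exact Subtype.ext rfl
      · intro a ha; rfl
      · intro a ha; exact (hgval a.1 a.2).symm
    rw [← heq]
    exact hle
  · rw [hsum]; exact hfs


lemma desc_eq_insert_children {r : V} {p : V → V} {d : V → ℕ} (hpr : p r = r)
    (hd : ∀ v, v ≠ r → d (p v) + 1 = d v) {c : V} (hcmax : ∀ x, d x ≤ d c + 1) :
    desc p c = insert c (children p c) := by
  apply Finset.Subset.antisymm
  · intro v hv
    by_cases e : v = c
    · exact Finset.mem_insert.2 (Or.inl e)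
    · have hdd := desc_depth hpr hd v hv e
      have hvr : v ≠ r := by
        rintro rfl
        exact e (root_mem_desc hpr hv).symm
      have hdv : d (p v) + 1 = d v := hd v hvr
      have hpv : p v ∈ desc p c := desc_step hv e
      by_cases e2 : p v = c
      · exact Finset.mem_insert.2 (Or.inr (mem_children.2 ⟨e2, e⟩))
      · have := desc_depth hpr hd (p v) hpv e2
        have := hcmax v
        omega
  · intro v hv
    rcases Finset.mem_insert.1 hv with rfl | hv
    · exact self_mem_desc p v
    · exact children_subset_desc hv

lemma desc_two_levels {r : V} {p : V → V} {d : V → ℕ} (hpr : p r = r)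
    (hd : ∀ v, v ≠ r → d (p v) + 1 = d v) {w : V} (hwmax : ∀ x, d x ≤ d w + 2) :
    desc p w = insert w (children p w ∪ (children p w).biUnion (fun c => children p c)) := by
  apply Finset.Subset.antisymm
  · intro v hv
    by_cases e : v = w
    · exact Finset.mem_insert.2 (Or.inl e)
    · have hdd := desc_depth hpr hd v hv e
      have hvr : v ≠ r := by
        rintro rfl
        exact e (root_mem_desc hpr hv).symm
      have hdv : d (p v) + 1 = d v := hd v hvr
      have hpv : p v ∈ desc p w := desc_step hv e
      by_cases e2 : p v = w
      · exact Finset.mem_insert.2 (Or.inr (Finset.mem_union.2 (Or.inl (mem_children.2 ⟨e2, e⟩))))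
      · have hdd2 := desc_depth hpr hd (p v) hpv e2
        have hpvr : p v ≠ r := by
          rintro hpvr
          have : w = r := root_mem_desc hpr (hpvr ▸ hpv)
          rw [this] at e2
          exact e2 hpvr
        have hdpv : d (p (p v)) + 1 = d (p v) := hd (p v) hpvr
        have hppv : p (p v) ∈ desc p w := desc_step hpv e2
        have e3 : p (p v) = w := by
          by_contra e3
          have := desc_depth hpr hd (p (p v)) hppv e3
          have := hwmax v
          omega
        have hpvC : p v ∈ children p w := mem_children.2 ⟨e3, e2⟩
        have hvC : v ∈ children p (p v) := mem_children.2 ⟨rfl, by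
          intro e4
          rw [← e4] at hdv
          omega⟩
        exact Finset.mem_insert.2 (Or.inr (Finset.mem_union.2 (Or.inr
          (Finset.mem_biUnion.2 ⟨p v, hpvC, hvC⟩))))
  · intro v hv
    rcases Finset.mem_insert.1 hv with rfl | hv
    · exact self_mem_desc p v
    · rcases Finset.mem_union.1 hv with hv | hv
      · exact children_subset_desc hv
      · obtain ⟨c, hcC, hvc⟩ := Finset.mem_biUnion.1 hv
        refine mem_desc.2 ⟨2, ?_⟩
        show p (p v) = w
        rw [(mem_children.1 hvc).1]
        exact (mem_children.1 hcC).1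

lemma key : ∀ (n : ℕ) (V : Type u) [Fintype V], ∀ (r : V) (p : V → V) (d : V → ℕ),
    Fintype.card V = n → p r = r → d r = 0 → (∀ v, v ≠ r → d (p v) + 1 = d v) → 3 ≤ n →
    ∃ f : V → ℕ, (∀ v, f v ≤ 2) ∧ (∀ v, f v = 0 → 2 ≤ ∑ u ∈ tnbr p v, f u) ∧
      4 * ∑ v, f v ≤ 3 * n := by
  intro n
  induction n using Nat.strong_induction_on with
  | _ n IH =>
  intro V instV r p d hcard hpr hdr hd hn
  obtain ⟨v₀, -, hmax'⟩ := Finset.exists_max_image (univ : Finset V) d ⟨r, Finset.mem_univ r⟩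
  have hmax : ∀ x, d x ≤ d v₀ := fun x => hmax' x (Finset.mem_univ x)
  by_cases hstar : d v₀ ≤ 1
  case pos =>
    refine ⟨fun x => if x = r then 2 else 0, ?_, ?_, ?_⟩
    · intro v; by_cases h : v = r <;> simp [h]
    · intro v hv
      beta_reduce at hv ⊢
      have hvr : v ≠ r := by
        intro h; rw [if_pos h] at hv; omega
      have h1 := hd v hvr
      have h2 := hmax v
      have hpv : p v = r := depth_zero_eq_root hd (by omega)
      have hrmem : r ∈ tnbr p v := mem_tnbr.2 (Or.inr ⟨hpv, fun h => hvr h.symm⟩)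
      have hs := Finset.single_le_sum (f := fun x => if x = r then (2:ℕ) else 0)
        (fun i _ => Nat.zero_le _) hrmem
      simpa using hs
    · beta_reduce
      have h2 : ∑ v : V, (if v = r then (2:ℕ) else 0) = 2 := by simp
      rw [h2]; omega
  case neg =>
  push_neg at hstar
  have hv0r : v₀ ≠ r := by intro e; rw [e, hdr] at hstar; omega
  have hdu : d (p v₀) + 1 = d v₀ := hd v₀ hv0r
  have hur : p v₀ ≠ r := by intro e; rw [e, hdr] at hdu; omega
  have hdw : d (p (p v₀)) + 1 = d (p v₀) := hd (p v₀) hur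
  set u := p v₀ with hu
  set w := p u with hw
  have huC : u ∈ children p w := mem_children.2 ⟨rfl, by intro e; rw [e] at hdw; omega⟩
  by_cases hcase : ∃ c ∈ children p w, 2 ≤ (children p c).card
  case pos =>
    obtain ⟨c, hcC, hl⟩ := hcase
    have hdc : d c = d w + 1 := children_depth hpr hd hcC
    have hcr : c ≠ r := by intro e; rw [e, hdr] at hdc; omega
    have hdw1 : d (p c) + 1 = d c := hd c hcr
    have hcmax : ∀ x, d x ≤ d c + 1 := by intro x; have := hmax x; omega
    have hSdef : desc p c = insert c (children p c) := desc_eq_insert_children hpr hd hcmax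
    have hrS : r ∉ desc p c := fun hm => hcr (root_mem_desc hpr hm)
    have hcS : c ∈ desc p c := self_mem_desc p c
    have hcnotch : c ∉ children p c := fun hm => (mem_children.1 hm).2 rfl
    have hScard : (desc p c).card = 1 + (children p c).card := by
      rw [hSdef, Finset.card_insert_of_notMem hcnotch]; omega
    have hw1S : p c ∉ desc p c := by
      intro hm
      by_cases e : p c = c
      · rw [e] at hdw1; omega
      · have := desc_depth hpr hd (p c) hm e; omega
    have hScl : ∀ v, v ∉ desc p c → p v ∉ desc p c := fun v hv => compl_closed hv
    have hcw1 : c ∈ tnbr p (p c) :=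
      mem_tnbr.2 (Or.inl ⟨rfl, by intro e; rw [← e] at hdw1; omega⟩)
    have hcards : (desc p c).card + (desc p c)ᶜ.card = n := by
      rw [← hcard]; exact Finset.card_add_card_compl _
    by_cases hrec : 3 ≤ ((desc p c)ᶜ).card
    case pos =>
      obtain ⟨g, hg2, hgS, hgc, hgs⟩ :=
        splice IH hcard hpr hdr hd (desc p c) hScl hrS ⟨c, hcS⟩ hrec
      refine ⟨fun x => (if x = c then 2 else 0) + g x, ?_, ?_, ?_⟩
      · intro v
        beta_reduce
        by_cases e : v = c
        · rw [if_pos e, hgS v (by rw [e]; exact hcS)]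
        · rw [if_neg e]; have := hg2 v; omega
      · intro v hv
        beta_reduce at hv ⊢
        by_cases e : v = c
        · rw [if_pos e] at hv; omega
        · rw [if_neg e] at hv
          by_cases hvS : v ∈ desc p c
          · have hvch : v ∈ children p c := by
              rw [hSdef] at hvS
              rcases Finset.mem_insert.1 hvS with e' | h'
              · exact absurd e' e
              · exact h'
            have hctn : c ∈ tnbr p v := mem_tnbr.2 (Or.inr
              ⟨(mem_children.1 hvch).1, fun h => (mem_children.1 hvch).2 h.symm⟩)
            have hs := Finset.single_le_sum (f := fun x => (if x = c then 2 else 0) + g x)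
              (fun i _ => Nat.zero_le _) hctn
            beta_reduce at hs
            rw [if_pos rfl] at hs
            omega
          · have h1 := hgc v hvS (by omega)
            calc (2:ℕ) ≤ ∑ x ∈ ((tnbr p v).filter (fun x => x ∉ desc p c)), g x := h1
              _ ≤ ∑ x ∈ tnbr p v, g x :=
                  Finset.sum_le_sum_of_subset (Finset.filter_subset _ _)
              _ ≤ ∑ x ∈ tnbr p v, ((if x = c then 2 else 0) + g x) :=
                  Finset.sum_le_sum (fun i _ => Nat.le_add_left _ _)
      · beta_reduce
        rw [Finset.sum_add_distrib]
        have h2 : ∑ v : V, (if v = c then (2:ℕ) else 0) = 2 := by simp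
        rw [h2]
        omega
    case neg =>
      have hw1T : p c ∈ (desc p c)ᶜ := Finset.mem_compl.2 hw1S
      have hT1 : 1 ≤ ((desc p c)ᶜ).card := Finset.card_pos.2 ⟨p c, hw1T⟩
      refine ⟨fun x => (if x = c then 2 else 0) +
        (if x ∈ ((desc p c)ᶜ).erase (p c) then 1 else 0), ?_, ?_, ?_⟩
      · intro v
        beta_reduce
        by_cases e : v = c
        · rw [if_pos e, if_neg (by
            rw [e]
            intro hm
            exact (Finset.mem_compl.1 (Finset.mem_of_mem_erase hm)) hcS)]
        · rw [if_neg e]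
          by_cases e2 : v ∈ ((desc p c)ᶜ).erase (p c)
          · rw [if_pos e2]; omega
          · rw [if_neg e2]; omega
      · intro v hv
        beta_reduce at hv ⊢
        by_cases e : v = c
        · rw [if_pos e] at hv; omega
        · rw [if_neg e] at hv
          have hv2 : v ∉ ((desc p c)ᶜ).erase (p c) := by
            intro hm; rw [if_pos hm] at hv; omega
          have hctn : c ∈ tnbr p v := by
            by_cases hvS : v ∈ desc p c
            · have hvch : v ∈ children p c := by
                rw [hSdef] at hvS
                rcases Finset.mem_insert.1 hvS with e' | h'
                · exact absurd e' e
                · exact h'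
              exact mem_tnbr.2 (Or.inr
                ⟨(mem_children.1 hvch).1, fun h => (mem_children.1 hvch).2 h.symm⟩)
            · have hvx : v = p c := by
                have hvT : v ∈ (desc p c)ᶜ := Finset.mem_compl.2 hvS
                by_contra hne
                exact hv2 (Finset.mem_erase.2 ⟨hne, hvT⟩)
              rw [hvx]; exact hcw1
          have hs := Finset.single_le_sum (f := fun x => (if x = c then 2 else 0) +
            (if x ∈ ((desc p c)ᶜ).erase (p c) then 1 else 0))
            (fun i _ => Nat.zero_le _) hctn
          beta_reduce at hs
          rw [if_pos rfl] at hs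
          omega
      · beta_reduce
        rw [Finset.sum_add_distrib]
        have h2 : ∑ v : V, (if v = c then (2:ℕ) else 0) = 2 := by simp
        have h3 : ∑ v : V, (if v ∈ ((desc p c)ᶜ).erase (p c) then (1:ℕ) else 0)
            = ((desc p c)ᶜ).card - 1 := by
          rw [Finset.sum_ite_mem, Finset.univ_inter, Finset.sum_const, smul_eq_mul, mul_one,
            Finset.card_erase_of_mem hw1T]
        rw [h2, h3]
        omega
  case neg =>
    push_neg at hcase
    have hv0u : v₀ ∈ children p u := mem_children.2 ⟨rfl, by intro e; rw [e] at hdu; omega⟩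
    have huH : u ∈ (children p w).filter (fun c => (children p c).Nonempty) :=
      Finset.mem_filter.2 ⟨huC, ⟨v₀, hv0u⟩⟩
    have hHpos : 1 ≤ ((children p w).filter (fun c => (children p c).Nonempty)).card :=
      Finset.card_pos.2 ⟨u, huH⟩
    have hCsplit := Finset.card_filter_add_card_filter_not
      (s := children p w) (p := fun c => (children p c).Nonempty)
    have hdisj : ∀ c1 ∈ children p w, ∀ c2 ∈ children p w, c1 ≠ c2 →
        Disjoint (children p c1) (children p c2) := by
      intro c1 _ c2 _ hne
      rw [Finset.disjoint_left]
      intro a h1 h2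
      exact hne ((mem_children.1 h1).1.symm.trans (mem_children.1 h2).1)
    have hGCcard : ((children p w).biUnion (fun c => children p c)).card
        = ((children p w).filter (fun c => (children p c).Nonempty)).card := by
      rw [Finset.card_biUnion hdisj,
        ← Finset.sum_filter_add_sum_filter_not (children p w)
          (fun c => (children p c).Nonempty) (fun c => (children p c).card)]
      have e1 : ∑ c ∈ (children p w).filter (fun c => (children p c).Nonempty),
          (children p c).card
          = ∑ _c ∈ (children p w).filter (fun c => (children p c).Nonempty), 1 := by
        apply Finset.sum_congr rfl
        intro c hc
        obtain ⟨hcC', hne⟩ := Finset.mem_filter.1 hc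
        have h1 := hcase c hcC'
        have h2 := Finset.card_pos.2 hne
        omega
      have e2 : ∑ c ∈ (children p w).filter (fun c => ¬(children p c).Nonempty),
          (children p c).card = 0 := by
        apply Finset.sum_eq_zero
        intro c hc
        obtain ⟨-, hne⟩ := Finset.mem_filter.1 hc
        rw [Finset.not_nonempty_iff_eq_empty.1 hne, Finset.card_empty]
      rw [e1, e2, Finset.sum_const, smul_eq_mul, mul_one]
      omega
    have hdC : ∀ c ∈ children p w, d c = d w + 1 := fun c hc => children_depth hpr hd hc
    have hdGC : ∀ x ∈ (children p w).biUnion (fun c => children p c), d x = d w + 2 := by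
      intro x hx
      obtain ⟨c, hc, hx2⟩ := Finset.mem_biUnion.1 hx
      rw [children_depth hpr hd hx2, hdC c hc]
    have hwmax : ∀ x, d x ≤ d w + 2 := by intro x; have := hmax x; omega
    have hSdef := desc_two_levels hpr hd hwmax
    have hwnot : w ∉ children p w ∪ (children p w).biUnion (fun c => children p c) := by
      intro hm
      rcases Finset.mem_union.1 hm with hm | hm
      · have := hdC w hm; omega
      · have := hdGC w hm; omega
    have hdisj2 : Disjoint (children p w) ((children p w).biUnion (fun c => children p c)) := by
      rw [Finset.disjoint_left]
      intro a h1 h2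
      have e1 := hdC a h1
      have e2 := hdGC a h2
      omega
    have hScard : (desc p w).card = 1 + (children p w).card
        + ((children p w).biUnion (fun c => children p c)).card := by
      rw [hSdef, Finset.card_insert_of_notMem hwnot, Finset.card_union_of_disjoint hdisj2]
      omega
    have hScl : ∀ v, v ∉ desc p w → p v ∉ desc p w := fun v hv => compl_closed hv
    have hcards : (desc p w).card + (desc p w)ᶜ.card = n := by
      rw [← hcard]; exact Finset.card_add_card_compl _
    set b := ((children p w).filter (fun c => ¬(children p c).Nonempty)).card with hb
    set a1 := ((children p w).filter (fun c => (children p c).Nonempty)).card with ha1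
    set wv : ℕ := if b = 0 then 1 else 2 with hwvdef
    have hwv12 : wv = 1 ∧ b = 0 ∨ wv = 2 ∧ 1 ≤ b := by
      by_cases e : b = 0
      · left; exact ⟨by rw [hwvdef, if_pos e], e⟩
      · right; exact ⟨by rw [hwvdef, if_neg e], by omega⟩
    set fS : V → ℕ := fun x => (if x = w then wv else 0) +
      (if x ∈ (children p w).biUnion (fun c => children p c) then 1 else 0) with hfS
    have hwGC : w ∉ (children p w).biUnion (fun c => children p c) := by
      intro hm; have := hdGC w hm; omega
    have hGCS : ∀ x, x ∈ (children p w).biUnion (fun c => children p c) → x ∈ desc p w := by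
      intro x hx
      rw [hSdef]
      exact Finset.mem_insert.2 (Or.inr (Finset.mem_union.2 (Or.inr hx)))
    have hfSw : fS w = wv := by
      show (if w = w then wv else 0) +
        (if w ∈ (children p w).biUnion (fun c => children p c) then (1:ℕ) else 0) = wv
      rw [if_pos rfl, if_neg hwGC]
      omega
    have hfSsum : ∑ v : V, fS v = wv + a1 := by
      simp only [hfS]
      rw [Finset.sum_add_distrib]
      have h2 : ∑ v : V, (if v = w then wv else 0) = wv := by simp
      have h3 : ∑ v : V, (if v ∈ (children p w).biUnion (fun c => children p c)
          then (1:ℕ) else 0) = ((children p w).biUnion (fun c => children p c)).card := by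
        rw [Finset.sum_ite_mem, Finset.univ_inter, Finset.sum_const, smul_eq_mul, mul_one]
      rw [h2, h3, hGCcard]
    have hfS2 : ∀ x, fS x ≤ 2 := by
      intro x
      simp only [hfS]
      by_cases e : x = w
      · rw [if_pos e, if_neg (by rw [e]; exact hwGC)]
        rcases hwv12 with ⟨h, -⟩ | ⟨h, -⟩ <;> omega
      · rw [if_neg e]
        by_cases e2 : x ∈ (children p w).biUnion (fun c => children p c)
        · rw [if_pos e2]; omega
        · rw [if_neg e2]; omega
    have hfS0S : ∀ v, v ∉ desc p w → fS v = 0 := by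
      intro v hv
      simp only [hfS]
      rw [if_neg (fun e => hv (by rw [e]; exact self_mem_desc p w)),
        if_neg (fun hm => hv (hGCS v hm))]
    have hcertS : ∀ g : V → ℕ, (∀ x ∈ desc p w, g x = 0) →
        ∀ v ∈ desc p w, fS v + g v = 0 → 2 ≤ ∑ x ∈ tnbr p v, (fS x + g x) := by
      intro g hg0 v hvS hv0
      have hgw : g w = 0 := hg0 w (self_mem_desc p w)
      have hfSv : fS v = 0 := by omega
      have hvw : v ≠ w := by
        intro e; rw [e, hfSw] at hfSv
        rcases hwv12 with ⟨h, -⟩ | ⟨h, -⟩ <;> omega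
      have hvGC : v ∉ (children p w).biUnion (fun c => children p c) := by
        intro hm
        simp only [hfS] at hfSv
        rw [if_pos hm, if_neg hvw] at hfSv
        omega
      have hvC : v ∈ children p w := by
        rw [hSdef] at hvS
        rcases Finset.mem_insert.1 hvS with e | hm
        · exact absurd e hvw
        rcases Finset.mem_union.1 hm with hm | hm
        · exact hm
        · exact absurd hm hvGC
      have hwtn : w ∈ tnbr p v := mem_tnbr.2 (Or.inr
        ⟨(mem_children.1 hvC).1, fun e => (mem_children.1 hvC).2 e.symm⟩)
      by_cases hvH : (children p v).Nonempty
      · obtain ⟨gc, hgcch⟩ := hvH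
        have hgcGC : gc ∈ (children p w).biUnion (fun c => children p c) :=
          Finset.mem_biUnion.2 ⟨v, hvC, hgcch⟩
        have hgctn : gc ∈ tnbr p v := mem_tnbr.2 (Or.inl
          ⟨(mem_children.1 hgcch).1, (mem_children.1 hgcch).2⟩)
        have hgcw : w ≠ gc := by
          intro e; subst e; exact hwGC hgcGC
        have hpair := le_sum_pair (f := fun x => fS x + g x) hwtn hgctn hgcw
        beta_reduce at hpair
        have h1 : fS w + g w = wv := by rw [hfSw, hgw]; omega
        have h2 : 1 ≤ fS gc := by
          simp only [hfS]
          rw [if_pos hgcGC]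
          omega
        rcases hwv12 with ⟨h, -⟩ | ⟨h, -⟩ <;> omega
      · have hvB : v ∈ (children p w).filter (fun c => ¬(children p c).Nonempty) :=
          Finset.mem_filter.2 ⟨hvC, hvH⟩
        have hbpos : 1 ≤ b := Finset.card_pos.2 ⟨v, hvB⟩
        have hwv2' : wv = 2 := by rcases hwv12 with ⟨-, h⟩ | ⟨h, -⟩ <;> omega
        have hs := Finset.single_le_sum (f := fun x => fS x + g x)
          (fun i _ => Nat.zero_le _) hwtn
        have h1 : fS w + g w = wv := by rw [hfSw, hgw]; omega
        beta_reduce at hs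
        omega
    by_cases hrec : 3 ≤ ((desc p w)ᶜ).card
    case pos =>
      have hrS : r ∉ desc p w := by
        intro hm
        have hwr : w = r := root_mem_desc hpr hm
        have hall : ∀ v : V, v ∈ desc p w := by
          rw [hwr]; exact desc_root hd
        have h0 : ((desc p w)ᶜ).card = 0 := by
          rw [Finset.card_eq_zero, Finset.eq_empty_iff_forall_notMem]
          intro x hx
          exact (Finset.mem_compl.1 hx) (hall x)
        omega
      obtain ⟨g, hg2, hgS, hgc, hgs⟩ :=
        splice IH hcard hpr hdr hd (desc p w) hScl hrS ⟨w, self_mem_desc p w⟩ hrec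
      refine ⟨fun x => fS x + g x, ?_, ?_, ?_⟩
      · intro v
        beta_reduce
        by_cases hvS : v ∈ desc p w
        · rw [hgS v hvS]; have := hfS2 v; omega
        · have := hfS0S v hvS; have := hg2 v; omega
      · intro v hv
        beta_reduce at hv ⊢
        by_cases hvS : v ∈ desc p w
        · exact hcertS g hgS v hvS hv
        · have h1 := hgc v hvS (by have := hfS0S v hvS; omega)
          calc (2:ℕ) ≤ ∑ x ∈ ((tnbr p v).filter (fun x => x ∉ desc p w)), g x := h1
            _ ≤ ∑ x ∈ tnbr p v, g x :=
                Finset.sum_le_sum_of_subset (Finset.filter_subset _ _)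
            _ ≤ ∑ x ∈ tnbr p v, (fS x + g x) :=
                Finset.sum_le_sum (fun i _ => Nat.le_add_left _ _)
      · beta_reduce
        rw [Finset.sum_add_distrib, hfSsum]
        omega
    case neg =>
      by_cases h0 : ((desc p w)ᶜ).card = 0
      · have hSall : ∀ x : V, x ∈ desc p w := by
          intro x
          by_contra hx
          have hxT : x ∈ (desc p w)ᶜ := Finset.mem_compl.2 hx
          rw [Finset.card_eq_zero] at h0
          rw [h0] at hxT
          exact absurd hxT (Finset.notMem_empty x)
        refine ⟨fS, hfS2, ?_, ?_⟩
        · intro v hv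
          beta_reduce at hv ⊢
          have hc := hcertS (fun _ => 0) (fun _ _ => rfl) v (hSall v)
            (by show fS v + 0 = 0; omega)
          calc (2:ℕ) ≤ ∑ x ∈ tnbr p v, (fS x + 0) := hc
            _ = ∑ x ∈ tnbr p v, fS x := by simp
        · beta_reduce
          rw [hfSsum]; omega
      · have hwr : w ≠ r := by
          intro e
          apply h0
          rw [Finset.card_eq_zero, Finset.eq_empty_iff_forall_notMem]
          intro x hx
          exact (Finset.mem_compl.1 hx) (by rw [e]; exact desc_root hd x)
        have hdwp : d (p w) + 1 = d w := hd w hwr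
        have hxS : p w ∉ desc p w := by
          intro hm
          by_cases e : p w = w
          · exact hwr (fix_eq_root hd e)
          · have := desc_depth hpr hd (p w) hm e; omega
        have hwx : w ≠ p w := fun e => hxS (by rw [← e]; exact self_mem_desc p w)
        have hwtnx : w ∈ tnbr p (p w) :=
          mem_tnbr.2 (Or.inl ⟨rfl, hwx⟩)
        have hxT : p w ∈ (desc p w)ᶜ := Finset.mem_compl.2 hxS
        by_cases h1 : ((desc p w)ᶜ).card = 1
        · have hSc : (desc p w)ᶜ = {p w} := by
            obtain ⟨a, ha⟩ := Finset.card_eq_one.1 h1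
            rw [ha] at hxT ⊢
            rw [Finset.mem_singleton] at hxT
            rw [hxT]
          refine ⟨fun x => fS x + (if x = p w then 2 - wv else 0), ?_, ?_, ?_⟩
          · intro v
            beta_reduce
            by_cases e : v = p w
            · rw [if_pos e]
              have h5 := hfS0S v (by rw [e]; exact hxS)
              rcases hwv12 with ⟨h, -⟩ | ⟨h, -⟩ <;> omega
            · rw [if_neg e]; have := hfS2 v; omega
          · intro v hv
            beta_reduce at hv ⊢
            by_cases hvS : v ∈ desc p w
            · exact hcertS _ (fun x hx => by
                rw [if_neg (fun e => hxS (by rw [← e]; exact hx))]) v hvS hv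
            · have hveq : v = p w := by
                have hvT : v ∈ (desc p w)ᶜ := Finset.mem_compl.2 hvS
                rw [hSc, Finset.mem_singleton] at hvT
                exact hvT
              rw [hveq] at hv ⊢
              rw [if_pos rfl] at hv
              have hwv2' : wv = 2 := by
                rcases hwv12 with ⟨h, -⟩ | ⟨h, -⟩ <;> omega
              have hs := Finset.single_le_sum
                (f := fun x => fS x + (if x = p w then 2 - wv else 0))
                (fun i _ => Nat.zero_le _) hwtnx
              beta_reduce at hs
              rw [if_neg hwx, hfSw] at hs
              omega
          · beta_reduce
            rw [Finset.sum_add_distrib, hfSsum]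
            have h3 : ∑ v : V, (if v = p w then 2 - wv else 0) = 2 - wv := by simp
            rw [h3]
            omega
        · have h2' : ((desc p w)ᶜ).card = 2 := by omega
          have herase : (((desc p w)ᶜ).erase (p w)).card = 1 := by
            rw [Finset.card_erase_of_mem hxT, h2']
          obtain ⟨y, hy⟩ := Finset.card_eq_one.1 herase
          have hyT : y ∈ (desc p w)ᶜ ∧ y ≠ p w := by
            have hm : y ∈ ((desc p w)ᶜ).erase (p w) := by
              rw [hy]; exact Finset.mem_singleton_self y
            exact ⟨Finset.mem_of_mem_erase hm, (Finset.mem_erase.1 hm).1⟩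
          have hmem2 : ∀ z ∈ (desc p w)ᶜ, z = p w ∨ z = y := by
            intro z hz
            by_cases e : z = p w
            · exact Or.inl e
            · right
              have hm : z ∈ ((desc p w)ᶜ).erase (p w) := Finset.mem_erase.2 ⟨e, hz⟩
              rw [hy, Finset.mem_singleton] at hm
              exact hm
          have hytn : y ∈ tnbr p (p w) := by
            have hpx : p (p w) ∈ (desc p w)ᶜ := Finset.mem_compl.2 (hScl _ hxS)
            rcases hmem2 _ hpx with e | e
            · have hxr : p w = r := fix_eq_root hd e
              have hyr : y ≠ r := by rw [← hxr]; exact hyT.2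
              have hpy : p y ∈ (desc p w)ᶜ :=
                Finset.mem_compl.2 (hScl _ (Finset.mem_compl.1 hyT.1))
              rcases hmem2 _ hpy with e2 | e2
              · exact mem_tnbr.2 (Or.inl ⟨e2, hyT.2⟩)
              · exact absurd (fix_eq_root hd e2) hyr
            · exact mem_tnbr.2 (Or.inr ⟨e, hyT.2⟩)
          have hwy : w ≠ y := fun e =>
            (Finset.mem_compl.1 hyT.1) (by rw [← e]; exact self_mem_desc p w)
          have hyS : y ∉ desc p w := Finset.mem_compl.1 hyT.1
          refine ⟨fun x => fS x + (if x = y then 1 else 0), ?_, ?_, ?_⟩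
          · intro v
            beta_reduce
            by_cases e : v = y
            · rw [if_pos e]
              have := hfS0S v (by rw [e]; exact hyS)
              omega
            · rw [if_neg e]; have := hfS2 v; omega
          · intro v hv
            beta_reduce at hv ⊢
            by_cases hvS : v ∈ desc p w
            · exact hcertS _ (fun x hx => by
                rw [if_neg (fun e => hyS (by rw [← e]; exact hx))]) v hvS hv
            · have hvT : v ∈ (desc p w)ᶜ := Finset.mem_compl.2 hvS
              rcases hmem2 _ hvT with e | e
              · rw [e] at hv ⊢
                have hpair := le_sum_pair (f := fun x => fS x + (if x = y then 1 else 0))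
                  hwtnx hytn hwy
                beta_reduce at hpair
                have hv1 : fS w + (if w = y then 1 else 0) = wv := by
                  rw [if_neg hwy, hfSw]; omega
                have hv2 : 1 ≤ fS y + (if y = y then 1 else 0) := by
                  rw [if_pos rfl]; omega
                rcases hwv12 with ⟨h, -⟩ | ⟨h, -⟩ <;> omega
              · rw [e, if_pos rfl] at hv
                omega
          · beta_reduce
            rw [Finset.sum_add_distrib, hfSsum]
            have h3 : ∑ v : V, (if v = y then (1:ℕ) else 0) = 1 := by simp
            rw [h3]
            omega

lemma exists_parent {V : Type u} (G : SimpleGraph V) (hconn : G.Connected) (r : V) :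
    ∀ v : V, v ≠ r → ∃ x, G.Adj x v ∧ G.dist r x + 1 = G.dist r v := by
  intro v hv
  obtain ⟨q, hq⟩ := hconn.exists_walk_length_eq_dist v r
  cases q with
  | nil => exact absurd rfl hv
  | @cons _ x _ h q' =>
    refine ⟨x, h.symm, ?_⟩
    have h1 : G.dist r x ≤ q'.length := by
      rw [SimpleGraph.dist_comm]
      exact SimpleGraph.dist_le q'
    have h2 : G.dist r v ≤ G.dist r x + 1 := by
      have h3 := hconn.dist_triangle (u := r) (v := x) (w := v)
      have hxv : G.dist x v ≤ 1 := le_of_eq (SimpleGraph.dist_eq_one_iff_adj.2 h.symm)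
      omega
    have h3 : q'.length + 1 = G.dist v r := by
      rw [← hq, SimpleGraph.Walk.length_cons]
    have h4 : G.dist v r = G.dist r v := SimpleGraph.dist_comm
    omega

end ItalianAux

theorem italianDom_le_three_quarters {V : Type*} [Fintype V] (G : SimpleGraph V)
    (hconn : G.Connected) (hn : 3 ≤ Fintype.card V) :
    4 * italianDomNumber G ≤ 3 * Fintype.card V := by
  classical
  have hne : Nonempty V := Fintype.card_pos_iff.1 (by omega)
  obtain ⟨r⟩ := hne
  have hpar : ∀ v : V, v ≠ r → ∃ x, G.Adj x v ∧ G.dist r x + 1 = G.dist r v :=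
    ItalianAux.exists_parent G hconn r
  set d : V → ℕ := fun v => G.dist r v with hddef
  set p : V → V := fun v => if h : v = r then r else (hpar v h).choose with hpdef
  have hpr : p r = r := dif_pos rfl
  have hadj : ∀ v, v ≠ r → G.Adj (p v) v := by
    intro v h
    simp only [hpdef]
    rw [dif_neg h]
    exact (hpar v h).choose_spec.1
  have hd : ∀ v, v ≠ r → d (p v) + 1 = d v := by
    intro v h
    show G.dist r (p v) + 1 = G.dist r v
    simp only [hpdef]
    rw [dif_neg h]
    exact (hpar v h).choose_spec.2
  have hdr : d r = 0 := SimpleGraph.dist_self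
  obtain ⟨f, hf2, hfc, hfs⟩ :=
    ItalianAux.key (Fintype.card V) V r p d rfl hpr hdr hd hn
  have hIDF : IsIDF G f := by
    refine ⟨hf2, ?_⟩
    intro v hv
    have h1 := hfc v hv
    have hsub : ItalianAux.tnbr p v ⊆ Finset.univ.filter (fun u => G.Adj v u) := by
      intro x hx
      rcases ItalianAux.mem_tnbr.1 hx with ⟨h1', h2'⟩ | ⟨h1', h2'⟩
      · have hxr : x ≠ r := by
          intro e
          apply h2'
          rw [e] at h1' ⊢
          rw [hpr] at h1'
          exact h1'
        have ha := hadj x hxr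
        rw [h1'] at ha
        exact Finset.mem_filter.2 ⟨Finset.mem_univ x, ha⟩
      · have hvr : v ≠ r := by
          intro e
          apply h2'
          rw [e] at h1' ⊢
          rw [hpr] at h1'
          exact h1'.symm
        have ha := hadj v hvr
        rw [h1'] at ha
        exact Finset.mem_filter.2 ⟨Finset.mem_univ x, ha.symm⟩
    calc (2:ℕ) ≤ ∑ u ∈ ItalianAux.tnbr p v, f u := h1
      _ ≤ ∑ u ∈ Finset.univ.filter (fun u => G.Adj v u), f u :=
          Finset.sum_le_sum_of_subset hsub
  have hmem : italianDomNumber G ≤ ∑ v, f v := Nat.sInf_le ⟨f, hIDF, rfl⟩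
  calc 4 * italianDomNumber G ≤ 4 * ∑ v, f v := by omega
    _ ≤ 3 * Fintype.card V := hfs
end

section
/- If G is a graph of order n with minimum degree at least 2, then γ_I(G) ≤ 2n/3. -/
open Finset
open scoped Classical

section AuxItalian

variable {V : Type*} [Fintype V]

/-- Number of neighbours of `v` having colour `k` under the 3-colouring `c`. -/
private noncomputable def colA (G : SimpleGraph V) (c : V → Fin 3) (v : V) (k : Fin 3) : ℕ :=
  (Finset.univ.filter fun u => G.Adj v u ∧ c u = k).card

/-- Number of (ordered) monochromatic adjacent pairs for the colouring `c`. -/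
private noncomputable def colPhi (G : SimpleGraph V) (c : V → Fin 3) : ℕ :=
  ∑ w : V, ∑ u : V, if G.Adj w u ∧ c u = c w then 1 else 0

private lemma sum_boole' {α : Type*} (s : Finset α) (p : α → Prop) [DecidablePred p] :
    (∑ x ∈ s, if p x then (1:ℕ) else 0) = (s.filter p).card := by
  simp [Finset.sum_boole]

private lemma colPhi_eq (G : SimpleGraph V) (c : V → Fin 3) (v : V) :
    colPhi G c = 2 * colA G c v (c v) +
      ∑ w ∈ Finset.univ.erase v, ∑ u ∈ Finset.univ.erase v,
        if G.Adj w u ∧ c u = c w then 1 else 0 := by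
  classical
  have hsplit : colPhi G c = (∑ u : V, if G.Adj v u ∧ c u = c v then (1:ℕ) else 0) +
      ∑ w ∈ Finset.univ.erase v, ∑ u : V, if G.Adj w u ∧ c u = c w then (1:ℕ) else 0 := by
    rw [colPhi, ← Finset.add_sum_erase Finset.univ _ (Finset.mem_univ v)]
  have h1 : (∑ u : V, if G.Adj v u ∧ c u = c v then (1:ℕ) else 0) = colA G c v (c v) := by
    rw [sum_boole']
    unfold colA
    congr 1
  have hinner : ∀ w : V, (∑ u : V, if G.Adj w u ∧ c u = c w then (1:ℕ) else 0)
      = (if G.Adj w v ∧ c v = c w then (1:ℕ) else 0) +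
        ∑ u ∈ Finset.univ.erase v, if G.Adj w u ∧ c u = c w then (1:ℕ) else 0 := by
    intro w
    rw [← Finset.add_sum_erase Finset.univ _ (Finset.mem_univ v)]
  have h2 : (∑ w ∈ Finset.univ.erase v, if G.Adj w v ∧ c v = c w then (1:ℕ) else 0)
      = colA G c v (c v) := by
    rw [Finset.sum_erase _ (by simp [G.irrefl]), sum_boole']
    unfold colA
    congr 1
    ext w
    simp only [Finset.mem_filter, Finset.mem_univ, true_and]
    rw [G.adj_comm]
    exact and_congr Iff.rfl eq_comm
  rw [hsplit, h1]
  conv_lhs => rw [Finset.sum_congr rfl fun w _ => hinner w]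
  rw [Finset.sum_add_distrib, h2]
  ring

private lemma colPhi_swap (G : SimpleGraph V) (c : V → Fin 3) (v : V) (j : Fin 3) :
    colPhi G (Function.update c v j) + 2 * colA G c v (c v)
      = colPhi G c + 2 * colA G c v j := by
  classical
  rw [colPhi_eq G c v, colPhi_eq G (Function.update c v j) v]
  have hR : (∑ w ∈ Finset.univ.erase v, ∑ u ∈ Finset.univ.erase v,
        if G.Adj w u ∧ (Function.update c v j) u = (Function.update c v j) w then (1:ℕ) else 0)
      = ∑ w ∈ Finset.univ.erase v, ∑ u ∈ Finset.univ.erase v,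
        if G.Adj w u ∧ c u = c w then (1:ℕ) else 0 := by
    refine Finset.sum_congr rfl fun w hw => Finset.sum_congr rfl fun u hu => ?_
    rw [Function.update_of_ne (Finset.ne_of_mem_erase hu),
        Function.update_of_ne (Finset.ne_of_mem_erase hw)]
  have hA : colA G (Function.update c v j) v ((Function.update c v j) v) = colA G c v j := by
    rw [Function.update_self]
    unfold colA
    congr 1
    apply Finset.filter_congr
    intro u _
    by_cases hu : u = v
    · subst hu; simp [G.irrefl]
    · rw [Function.update_of_ne hu]
  rw [hR, hA]
  ring

private lemma degree_eq_filter (G : SimpleGraph V) (v : V) :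
    G.degree v = (Finset.univ.filter fun u => G.Adj v u).card := by
  rw [← SimpleGraph.card_neighborFinset_eq_degree]
  congr 1
  ext u
  simp [SimpleGraph.mem_neighborFinset]

private lemma two_le_cross (G : SimpleGraph V) (hdeg : ∀ v, 2 ≤ G.degree v) (c : V → Fin 3)
    (v : V) (hkey : ∀ j, colA G c v (c v) ≤ colA G c v j) :
    2 ≤ (Finset.univ.filter fun u => G.Adj v u ∧ ¬ (c u = c v)).card := by
  classical
  have hsum : colA G c v (c v) + (Finset.univ.filter fun u => G.Adj v u ∧ ¬ (c u = c v)).card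
      = G.degree v := by
    rw [degree_eq_filter]
    unfold colA
    rw [← Finset.filter_filter, ← Finset.filter_filter]
    exact Finset.card_filter_add_card_filter_not _
  by_cases h0 : colA G c v (c v) = 0
  · have := hdeg v
    omega
  · have h1 : 1 ≤ colA G c v (c v) := Nat.one_le_iff_ne_zero.mpr h0
    have hj := hkey (c v + 1)
    have hk := hkey (c v + 2)
    have hne12 : ∀ i : Fin 3, i + 1 ≠ i + 2 := by decide
    have hne1 : ∀ i : Fin 3, i + 1 ≠ i := by decide
    have hne2 : ∀ i : Fin 3, i + 2 ≠ i := by decide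
    have hdisj : Disjoint (Finset.univ.filter fun u => G.Adj v u ∧ c u = c v + 1)
        (Finset.univ.filter fun u => G.Adj v u ∧ c u = c v + 2) := by
      rw [Finset.disjoint_left]
      intro x hx1 hx2
      simp only [Finset.mem_filter, Finset.mem_univ, true_and] at hx1 hx2
      exact hne12 (c v) (hx1.2 ▸ hx2.2)
    have hunion : colA G c v (c v + 1) + colA G c v (c v + 2)
        ≤ (Finset.univ.filter fun u => G.Adj v u ∧ ¬ (c u = c v)).card := by
      unfold colA
      rw [← Finset.card_union_of_disjoint hdisj]
      apply Finset.card_le_card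
      apply Finset.union_subset <;> intro x hx <;>
        simp only [Finset.mem_filter, Finset.mem_univ, true_and] at hx ⊢
      · exact ⟨hx.1, hx.2 ▸ hne1 (c v)⟩
      · exact ⟨hx.1, hx.2 ▸ hne2 (c v)⟩
    omega

end AuxItalian

theorem italianDom_le_two_thirds {V : Type*} [Fintype V] (G : SimpleGraph V)
    (hdeg : ∀ v, 2 ≤ G.degree v) :
    3 * italianDomNumber G ≤ 2 * Fintype.card V := by
  classical
  -- choose a 3-colouring minimizing the number of monochromatic adjacent pairs
  obtain ⟨c, -, hc⟩ := Finset.exists_min_image (Finset.univ : Finset (V → Fin 3))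
    (colPhi G) ⟨fun _ => 0, Finset.mem_univ _⟩
  have hkey : ∀ v j, colA G c v (c v) ≤ colA G c v j := by
    intro v j
    have h1 := hc (Function.update c v j) (Finset.mem_univ _)
    have h2 := colPhi_swap G c v j
    omega
  -- each vertex has at least two neighbours of a different colour
  have hcross : ∀ v : V, 2 ≤ (Finset.univ.filter fun u => G.Adj v u ∧ ¬ (c u = c v)).card :=
    fun v => two_le_cross G hdeg c v (hkey v)
  -- the largest colour class
  obtain ⟨i, -, hi⟩ := Finset.exists_max_image (Finset.univ : Finset (Fin 3))
    (fun k => (Finset.univ.filter fun v => c v = k).card) ⟨0, Finset.mem_univ _⟩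
  have hcard : Fintype.card V = ∑ k : Fin 3, (Finset.univ.filter fun v => c v = k).card := by
    rw [← Finset.card_univ]
    exact Finset.card_eq_sum_card_fiberwise fun x _ => Finset.mem_univ (c x)
  have hmax : Fintype.card V ≤ 3 * (Finset.univ.filter fun v => c v = i).card := by
    rw [hcard]
    calc ∑ k : Fin 3, (Finset.univ.filter fun v => c v = k).card
        ≤ ∑ _k : Fin 3, (Finset.univ.filter fun v => c v = i).card :=
          Finset.sum_le_sum fun k _ => hi k (Finset.mem_univ k)
      _ = 3 * (Finset.univ.filter fun v => c v = i).card := by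
          simp [Finset.sum_const, mul_comm]
  -- the IDF: weight 1 on everything outside the largest colour class
  set f : V → ℕ := fun v => if c v = i then 0 else 1 with hf
  have hIDF : IsIDF G f := by
    constructor
    · intro v
      by_cases h : c v = i <;> simp [hf, h]
    · intro v hv
      have hvi : c v = i := by
        by_contra h
        simp [hf, h] at hv
      have hsumf : (∑ u ∈ Finset.univ.filter fun u => G.Adj v u, f u)
          = (Finset.univ.filter fun u => G.Adj v u ∧ ¬ (c u = c v)).card := by
        rw [Finset.sum_filter, ← sum_boole']
        refine Finset.sum_congr rfl fun u _ => ?_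
        by_cases h1 : G.Adj v u <;> by_cases h2 : c u = i <;>
          simp [hf, h1, h2, hvi]
      rw [hsumf]
      exact hcross v
  have hle : italianDomNumber G ≤ ∑ v, f v := Nat.sInf_le ⟨f, hIDF, rfl⟩
  have hw : (∑ v, f v) = (Finset.univ.filter fun v => ¬ (c v = i)).card := by
    rw [← sum_boole']
    refine Finset.sum_congr rfl fun v _ => ?_
    by_cases h : c v = i <;> simp [hf, h]
  have hsplit : (Finset.univ.filter fun v => c v = i).card
      + (Finset.univ.filter fun v => ¬ (c v = i)).card = Fintype.card V := by
    rw [Finset.card_filter_add_card_filter_not, Finset.card_univ]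
  omega
end

section
/- For n ≥ 2, the Italian domination number of the Sierpiński graph S(K_n, 2) is 2n − 1. -/
open Finset
open scoped Classical

lemma sierp2_adj {n : ℕ} {u v : Fin 2 → Fin n} :
    (sierpinskiGraph n 2).Adj u v ↔
      (u 0 = v 0 ∧ u 1 ≠ v 1) ∨ (u 0 ≠ v 0 ∧ u 1 = v 0 ∧ v 1 = u 0) := by
  have hne0 : u 0 ≠ v 0 → u ≠ v := fun h hh => h (congrFun hh 0)
  have hne1 : u 1 ≠ v 1 → u ≠ v := fun h hh => h (congrFun hh 1)
  simp only [sierpinskiGraph, SimpleGraph.fromRel_adj, Fin.exists_fin_two,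
    Fin.forall_fin_two, show ¬(0:Fin 2) < 0 by decide, show (0:Fin 2) < 1 by decide,
    show ¬(1:Fin 2) < 0 by decide, show ¬(1:Fin 2) < 1 by decide,
    false_implies, true_implies, true_and, and_true, ne_eq]
  constructor
  · rintro ⟨hne, h⟩
    rcases h with (⟨h1,h2,h3⟩|⟨h1,h2⟩)|(⟨h1,h2,h3⟩|⟨h1,h2⟩)
    · exact Or.inr ⟨h1, h2, h3⟩
    · exact Or.inl ⟨h1, h2⟩
    · exact Or.inr ⟨fun h => h1 h.symm, h3, h2⟩
    · exact Or.inl ⟨h1.symm, fun h => h2 h.symm⟩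
  · rintro (⟨h1,h2⟩|⟨h1,h2,h3⟩)
    · exact ⟨hne1 h2, Or.inl (Or.inr ⟨h1, h2⟩)⟩
    · exact ⟨hne0 h1, Or.inl (Or.inl ⟨h1, h2, h3⟩)⟩

def pr {n : ℕ} (a b : Fin n) : Fin 2 → Fin n := ![a, b]

@[simp] lemma pr0 {n : ℕ} (a b : Fin n) : pr a b 0 = a := rfl
@[simp] lemma pr1 {n : ℕ} (a b : Fin n) : pr a b 1 = b := rfl

lemma pr_inj {n : ℕ} {a b a' b' : Fin n} (h : pr a b = pr a' b') : a = a' ∧ b = b' :=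
  ⟨congrFun h 0, congrFun h 1⟩

lemma lower_bound {n : ℕ} (hn : 2 ≤ n) (f : (Fin 2 → Fin n) → ℕ)
    (hf : IsIDF (sierpinskiGraph n 2) f) : 2 * n - 1 ≤ ∑ v, f v := by
  set W : Fin n → ℕ := fun a => ∑ u ∈ univ.filter (fun u => u 0 = a), f u with hWdef
  have htot : ∑ a, W a = ∑ v, f v := by
    simp only [hWdef]; rw [Finset.sum_fiberwise]
  -- the diagonal vertex of each copy forces weight in the copy
  have hW2 : ∀ a, f (pr a a) = 0 → 2 ≤ W a := by
    intro a h
    refine le_trans (hf.2 (pr a a) h) (Finset.sum_le_sum_of_subset ?_)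
    intro u hu
    simp only [mem_filter, mem_univ, true_and] at hu ⊢
    rcases sierp2_adj.mp hu with ⟨h1, _⟩ | ⟨h1, h2, _⟩
    · exact h1.symm
    · exact absurd h2 h1
  have hmemd : ∀ a : Fin n, pr a a ∈ univ.filter (fun u => u 0 = a) := by
    intro a; simp
  have hW1 : ∀ a, 1 ≤ W a := by
    intro a
    by_cases h : f (pr a a) = 0
    · exact le_trans (by norm_num) (hW2 a h)
    · exact le_trans (Nat.one_le_iff_ne_zero.mpr h)
        (Finset.single_le_sum (fun i _ => Nat.zero_le _) (hmemd a))
  have hkey : ∀ a b : Fin n, a ≠ b → W a = 1 → f (pr a b) = 0 := by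
    intro a b hab hW
    have hd : f (pr a a) ≠ 0 := fun h => by have := hW2 a h; omega
    have hne : pr a a ≠ pr a b := fun h => hab (pr_inj h).2
    have hsub : ({pr a a, pr a b} : Finset _) ⊆ univ.filter (fun u => u 0 = a) := by
      intro u hu
      simp only [mem_insert, mem_singleton] at hu
      rcases hu with rfl | rfl <;> simp
    have hle : f (pr a a) + f (pr a b) ≤ W a := by
      have := Finset.sum_le_sum_of_subset (f := f) hsub
      rwa [Finset.sum_pair hne] at this
    omega
  have hcontr : ∀ a b : Fin n, a ≠ b → W a = 1 → W b = 1 → False := by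
    intro a b hab hWa hWb
    have hab0 : f (pr a b) = 0 := hkey a b hab hWa
    have hba0 : f (pr b a) = 0 := hkey b a hab.symm hWb
    have h2 := hf.2 (pr a b) hab0
    have hsub : univ.filter (fun u => (sierpinskiGraph n 2).Adj (pr a b) u) ⊆
        insert (pr b a) ((univ.filter (fun u => u 0 = a)).erase (pr a b)) := by
      intro u hu
      simp only [mem_filter, mem_univ, true_and] at hu
      rcases sierp2_adj.mp hu with ⟨h1, h2'⟩ | ⟨h1, h2', h3⟩
      · refine mem_insert_of_mem (Finset.mem_erase.mpr ⟨fun h => h2' (by rw [h]), ?_⟩)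
        simp only [mem_filter, mem_univ, true_and]
        exact h1.symm
      · refine Finset.mem_insert.mpr (Or.inl ?_)
        funext i
        fin_cases i
        · exact h2'.symm
        · exact h3
    have hnm : pr b a ∉ (univ.filter (fun u => u 0 = a)).erase (pr a b) := by
      intro h
      have := (mem_filter.mp (Finset.mem_erase.mp h).2).2
      exact hab (by simpa using this.symm)
    have hle : ∑ u ∈ univ.filter (fun u => (sierpinskiGraph n 2).Adj (pr a b) u), f u ≤
        f (pr b a) + ∑ u ∈ (univ.filter (fun u => u 0 = a)).erase (pr a b), f u := by
      have := Finset.sum_le_sum_of_subset (f := f) hsub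
      rwa [Finset.sum_insert hnm] at this
    have hle2 : ∑ u ∈ (univ.filter (fun u => u 0 = a)).erase (pr a b), f u ≤ W a := by
      simp only [hWdef]
      exact Finset.sum_le_sum_of_subset (Finset.erase_subset _ _)
    linarith
  -- conclude
  rw [← htot]
  have hcard : (univ : Finset (Fin n)).card = n := by simp
  by_cases hex : ∃ a, W a = 1
  · obtain ⟨a0, ha0⟩ := hex
    have h2 : ∀ a ∈ univ.erase a0, 2 ≤ W a := by
      intro a ha
      have hne : a ≠ a0 := (Finset.mem_erase.mp ha).1
      have := hW1 a
      rcases Nat.lt_or_ge (W a) 2 with h | h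
      · exact absurd (hcontr a a0 hne (by omega) ha0) (fun h => h)
      · exact h
    have hs : (univ.erase a0).card • 2 ≤ ∑ a ∈ univ.erase a0, W a :=
      Finset.card_nsmul_le_sum _ _ _ h2
    have hsplit : W a0 + ∑ a ∈ univ.erase a0, W a = ∑ a, W a :=
      Finset.add_sum_erase _ _ (mem_univ a0)
    have hce : (univ.erase a0).card = n - 1 := by
      rw [Finset.card_erase_of_mem (mem_univ a0), hcard]
    rw [hce] at hs
    simp only [smul_eq_mul] at hs
    omega
  · push_neg at hex
    have h2 : ∀ a ∈ univ, 2 ≤ W a := fun a _ => by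
      have := hW1 a; have := hex a; omega
    have hs : (univ : Finset (Fin n)).card • 2 ≤ ∑ a, W a :=
      Finset.card_nsmul_le_sum _ _ _ h2
    rw [hcard] at hs
    simp only [smul_eq_mul] at hs
    omega


lemma upper_bound {n : ℕ} (hn : 2 ≤ n) :
    ∃ f, IsIDF (sierpinskiGraph n 2) f ∧ ∑ v, f v = 2 * n - 1 := by
  haveI : NeZero n := ⟨by omega⟩
  refine ⟨fun v => if v 1 = 0 ∨ v 0 = v 1 then 1 else 0, ⟨fun v => by dsimp only; split <;> omega, ?_⟩, ?_⟩
  · intro v hv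
    dsimp only at hv
    rw [ite_eq_right_iff] at hv
    have hv' : ¬(v 1 = 0 ∨ v 0 = v 1) := fun h => by simpa using hv h
    push_neg at hv'
    obtain ⟨hv1, hv0⟩ := hv'
    by_cases h0 : v 0 = 0
    · -- neighbours: pr 0 0 and pr (v 1) 0
      have hadj1 : (sierpinskiGraph n 2).Adj v (pr 0 0) := by
        rw [sierp2_adj]; exact Or.inl ⟨by simp [h0], by simpa using hv1⟩
      have hadj2 : (sierpinskiGraph n 2).Adj v (pr (v 1) 0) := by
        rw [sierp2_adj]
        refine Or.inr ⟨?_, by simp, by simp [h0]⟩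
        rw [h0]; simpa using fun h => hv1 h.symm
      have hne : pr (0:Fin n) 0 ≠ pr (v 1) 0 := by
        intro h; exact hv1 ((pr_inj h).1).symm
      have hsub : ({pr (0:Fin n) 0, pr (v 1) 0} : Finset _) ⊆
          univ.filter (fun u => (sierpinskiGraph n 2).Adj v u) := by
        intro u hu
        simp only [mem_insert, mem_singleton] at hu
        rcases hu with rfl | rfl <;> simp [hadj1, hadj2]
      calc (2:ℕ) = ∑ u ∈ ({pr (0:Fin n) 0, pr (v 1) 0} : Finset _),
            (if u 1 = 0 ∨ u 0 = u 1 then 1 else 0) := by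
              rw [Finset.sum_pair hne]; simp
        _ ≤ _ := Finset.sum_le_sum_of_subset hsub
    · -- neighbours: pr (v 0) 0 and pr (v 0) (v 0)
      have hadj1 : (sierpinskiGraph n 2).Adj v (pr (v 0) 0) := by
        rw [sierp2_adj]; exact Or.inl ⟨rfl, by simpa using hv1⟩
      have hadj2 : (sierpinskiGraph n 2).Adj v (pr (v 0) (v 0)) := by
        rw [sierp2_adj]; exact Or.inl ⟨rfl, by simpa using fun h => hv0 h.symm⟩
      have hne : pr (v 0) 0 ≠ pr (v 0) (v 0) := by
        intro h; exact h0 ((pr_inj h).2).symm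
      have hsub : ({pr (v 0) 0, pr (v 0) (v 0)} : Finset _) ⊆
          univ.filter (fun u => (sierpinskiGraph n 2).Adj v u) := by
        intro u hu
        simp only [mem_insert, mem_singleton] at hu
        rcases hu with rfl | rfl <;> simp [hadj1, hadj2]
      calc (2:ℕ) = ∑ u ∈ ({pr (v 0) 0, pr (v 0) (v 0)} : Finset _),
            (if u 1 = 0 ∨ u 0 = u 1 then 1 else 0) := by
              rw [Finset.sum_pair hne]; simp
        _ ≤ _ := Finset.sum_le_sum_of_subset hsub
  · -- total weight
    have he : ∑ v : Fin 2 → Fin n, (if v 1 = 0 ∨ v 0 = v 1 then 1 else 0)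
        = ∑ p : Fin n × Fin n, (if p.2 = 0 ∨ p.1 = p.2 then 1 else 0) :=
      Fintype.sum_equiv (piFinTwoEquiv (fun _ => Fin n)) _ _ (fun v => rfl)
    rw [he, Fintype.sum_prod_type]
    have hinner : ∀ a : Fin n, ∑ b : Fin n, (if b = 0 ∨ a = b then 1 else 0)
        = if a = 0 then 1 else 2 := by
      intro a
      have hfil : (univ.filter (fun b : Fin n => b = 0 ∨ a = b)) = {0, a} := by
        ext b
        simp only [mem_filter, mem_univ, true_and, mem_insert, mem_singleton]
        constructor
        · rintro (h | h); exacts [Or.inl h, Or.inr h.symm]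
        · rintro (h | h); exacts [Or.inl h, Or.inr h.symm]
      rw [Finset.sum_boole, hfil, Nat.cast_id]
      by_cases h : a = 0
      · subst h; simp
      · rw [Finset.card_insert_of_notMem (by simpa using fun hh => h hh.symm),
          Finset.card_singleton, if_neg h]
    simp only [hinner]
    calc ∑ a : Fin n, (if a = 0 then 1 else 2)
        = (if (0:Fin n) = 0 then 1 else 2) + ∑ a ∈ univ.erase 0, (if a = 0 then 1 else 2) :=
          (Finset.add_sum_erase _ _ (mem_univ 0)).symm
      _ = 1 + ∑ _a ∈ univ.erase (0 : Fin n), 2 := by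
          rw [if_pos rfl, Finset.sum_congr rfl (fun a ha => if_neg (Finset.mem_erase.mp ha).1)]
      _ = 1 + (univ.erase (0:Fin n)).card * 2 := by rw [Finset.sum_const, smul_eq_mul]
      _ = 1 + (n-1) * 2 := by
          rw [Finset.card_erase_of_mem (mem_univ _), Finset.card_univ, Fintype.card_fin]
      _ = 2*n - 1 := by clear he hinner; omega
theorem italianDom_sierpinski_two (n : ℕ) (hn : 2 ≤ n) :
    italianDomNumber (sierpinskiGraph n 2) = 2 * n - 1 := by
  obtain ⟨f, hf, hsum⟩ := upper_bound hn
  have hmem : 2 * n - 1 ∈ {w | ∃ f, IsIDF (sierpinskiGraph n 2) f ∧ ∑ v, f v = w} :=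
    ⟨f, hf, hsum⟩
  refine le_antisymm (Nat.sInf_le hmem) (le_csInf ⟨_, hmem⟩ ?_)
  rintro w ⟨g, hg, rfl⟩
  exact lower_bound hn g hg
end

section
/- For n ≥ 3, the Italian domination number of the Sierpiński graph S(K_n, 3) is 2n(n − 1). -/
open Finset
open scoped Classical

/-!
Lower bound. Fix a first letter `i` and put `g a c = f (i a c)`. A vertex `i a b` with `b ≠ a`
sees exactly the row `g a ·` and the entry `g b a`, and the extreme vertex `i i i` sees the row
`g i ·`. If some row is empty, every other row has weight at least two. Otherwise only the rows
of weight one are deficient. Two such rows `a ≠ b` cannot have their nonzero entries in a common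
column outside `{a, b}`, so once there are three of them each one points into another row of
weight one. Then `i` is not one of them (its row would have to point at `i` itself), and each of
them forces `g i a ≥ 1`, so row `i` pays for all of them. Hence every copy carries weight
`2(n-1)`.

Upper bound. With `p ∘ q = id` and `p i ≠ q i` (e.g. `i ∓ 1` modulo `n`), weight one on
`i j (p i)` for all `j` and on `i j (q i)` for `j ∉ {p i, q i}` is Italian dominating: the vertex
`i (q i) (q i)` is helped by its link neighbour `(q i) i i = (q i) i (p (q i))`.
-/

section RowSums

variable {α : Type*} [Fintype α]

theorem eq_zero_of_sum_eq_one {f : α → ℕ} (hf : ∑ c, f c = 1) {x c : α} (hx : 1 ≤ f x)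
    (hc : c ≠ x) : f c = 0 := by
  have := add_le_sum (f := f) (fun _ _ => Nat.zero_le _) (mem_univ x) (mem_univ c) hc.symm
  omega

theorem add_two_mul_card_sub_one_le_sum (F : α → ℕ) (x : α) (h : ∀ a, a ≠ x → 2 ≤ F a) :
    F x + 2 * (Fintype.card α - 1) ≤ ∑ a, F a := by
  rw [← add_sum_erase _ _ (mem_univ x)]
  have := card_nsmul_le_sum (univ.erase x) (fun a => F a) 2 fun a ha => h a (ne_of_mem_erase ha)
  rw [card_erase_of_mem (mem_univ x), card_univ, smul_eq_mul] at this
  omega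

/-- The Italian condition at the vertices `a b`, `b ≠ a`, of `S(K_α, 2)` carrying the weights
`g a b`: their neighbours are the `a c` and `b a`. -/
def IsOffDiagItalian (g : α → α → ℕ) : Prop :=
  ∀ a b, b ≠ a → g a b = 0 → 2 ≤ ∑ c, g a c + g b a

def unitRows (g : α → α → ℕ) : Finset α := {a | ∑ c, g a c = 1}

theorem mem_unitRows {g : α → α → ℕ} {a : α} : a ∈ unitRows g ↔ ∑ c, g a c = 1 := by
  simp [unitRows]

namespace IsOffDiagItalian

variable {g : α → α → ℕ}

theorem two_mul_card_sub_one_le_sum_sum_of_sum_eq_zero (hg : IsOffDiagItalian g) {a₀ : α}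
    (ha₀ : ∑ c, g a₀ c = 0) : 2 * (Fintype.card α - 1) ≤ ∑ a, ∑ c, g a c := by
  refine le_trans (by omega) (add_two_mul_card_sub_one_le_sum _ a₀ fun b hb => ?_)
  have := hg a₀ b hb (sum_eq_zero_iff.1 ha₀ b (mem_univ b))
  have := single_le_sum (fun c _ => Nat.zero_le (g b c)) (mem_univ a₀)
  omega

theorem one_le_of_mem_unitRows (hg : IsOffDiagItalian g) {a b x : α} (ha : a ∈ unitRows g)
    (hb : b ∈ unitRows g) (hab : a ≠ b) (hbx : 1 ≤ g b x) (hax : a ≠ x) : 1 ≤ g a b := by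
  rw [mem_unitRows] at ha hb
  by_contra h
  have := hg a b hab.symm (by omega)
  have := eq_zero_of_sum_eq_one hb hbx hax
  omega

-- Two unit rows `b ≠ c` outside `{a, x}` would both point at `a`, which is impossible.
theorem mem_erase_of_three_le_card_unitRows (hg : IsOffDiagItalian g)
    (hT : 3 ≤ #(unitRows g)) {a x : α} (ha : a ∈ unitRows g) (hax : 1 ≤ g a x) :
    x ∈ (unitRows g).erase a := by
  by_contra hx
  obtain ⟨b, hb, c, hc, hbc⟩ := one_lt_card.1 (by rw [card_erase_of_mem ha]; omega)
  obtain ⟨hba, hb⟩ := mem_erase.1 hb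
  obtain ⟨hca, hc⟩ := mem_erase.1 hc
  have hba' : 1 ≤ g b a :=
    hg.one_le_of_mem_unitRows hb ha hba hax fun h => hx (h ▸ mem_erase.2 ⟨hba, hb⟩)
  have hca' : 1 ≤ g c a :=
    hg.one_le_of_mem_unitRows hc ha hca hax fun h => hx (h ▸ mem_erase.2 ⟨hca, hc⟩)
  have := hg.one_le_of_mem_unitRows hb hc hbc hca' hba
  have := eq_zero_of_sum_eq_one (mem_unitRows.1 hb) hba' hca
  omega

theorem card_unitRows_le_sum (hg : IsOffDiagItalian g) (hT : 3 ≤ #(unitRows g)) {i : α}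
    (hi : i ∉ unitRows g) : #(unitRows g) ≤ ∑ c, g i c := by
  calc #(unitRows g) = ∑ a ∈ unitRows g, 1 := card_eq_sum_ones _
    _ ≤ ∑ a ∈ unitRows g, g i a := sum_le_sum fun a ha => by
        have hrow := mem_unitRows.1 ha
        obtain ⟨x, -, hx⟩ := exists_ne_zero_of_sum_ne_zero (hrow ▸ one_ne_zero)
        have hxi : x ≠ i := fun h =>
          hi (h ▸ mem_of_mem_erase (hg.mem_erase_of_three_le_card_unitRows hT ha
            (Nat.one_le_iff_ne_zero.2 hx)))
        have := hg a i (fun h => hi (h ▸ ha))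
          (eq_zero_of_sum_eq_one hrow (Nat.one_le_iff_ne_zero.2 hx) hxi.symm)
        omega
    _ ≤ ∑ c, g i c := sum_le_sum_of_subset (subset_univ _)

theorem two_mul_card_sub_one_le_sum_sum (hg : IsOffDiagItalian g) (i : α)
    (hi : g i i = 0 → 2 ≤ ∑ c, g i c) : 2 * (Fintype.card α - 1) ≤ ∑ a, ∑ c, g a c := by
  by_cases hzero : ∃ a₀, ∑ c, g a₀ c = 0
  · obtain ⟨a₀, ha₀⟩ := hzero
    exact hg.two_mul_card_sub_one_le_sum_sum_of_sum_eq_zero ha₀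
  push Not at hzero
  set T := unitRows g
  have htopped (a : α) : 2 ≤ ∑ c, g a c + if a ∈ T then 1 else 0 := by
    have := hzero a
    split_ifs with ha <;> rw [mem_unitRows] at * <;> omega
  have hsum : ∑ c, g i c + (if i ∈ T then 1 else 0) + 2 * (Fintype.card α - 1)
      ≤ ∑ a, ∑ c, g a c + #T :=
    calc _ ≤ ∑ a, (∑ c, g a c + if a ∈ T then 1 else 0) :=
          add_two_mul_card_sub_one_le_sum _ i fun a _ => htopped a
      _ = ∑ a, ∑ c, g a c + #T := by
          rw [sum_add_distrib, sum_boole, filter_mem_eq_inter, univ_inter, Nat.cast_id]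
  by_cases hT : #T ≤ 2
  · have := htopped i
    omega
  replace hT : 3 ≤ #T := by omega
  have hiT : i ∉ T := fun hiT => by
    have hii : 1 ≤ g i i := by
      by_contra h
      have := hi (by omega)
      rw [mem_unitRows] at hiT
      omega
    simpa using hg.mem_erase_of_three_le_card_unitRows hT hiT hii
  have : #T ≤ ∑ c, g i c := hg.card_unitRows_le_sum hT hiT
  rw [if_neg hiT] at hsum
  omega

end IsOffDiagItalian

end RowSums

theorem Fintype.sum_fin_three_arrow {β M : Type*} [Fintype β] [AddCommMonoid M]
    (F : (Fin 3 → β) → M) : ∑ u, F u = ∑ a, ∑ b, ∑ c, F ![a, b, c] := by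
  let e : β × β × β ≃ (Fin 3 → β) :=
    ⟨fun p => ![p.1, p.2.1, p.2.2], fun u => (u 0, u 1, u 2), fun _ => rfl,
      fun u => by ext j; fin_cases j <;> rfl⟩
  rw [← Fintype.sum_equiv e _ _ fun _ => rfl]
  simp only [Fintype.sum_prod_type]
  rfl

theorem SimpleGraph.two_le_sum_adj {V : Type*} [Fintype V] {G : SimpleGraph V} {f : V → ℕ}
    {v x y : V} (hxy : x ≠ y) (hx : G.Adj v x) (hy : G.Adj v y) (hfx : 1 ≤ f x) (hfy : 1 ≤ f y) :
    2 ≤ ∑ u ∈ univ.filter fun u => G.Adj v u, f u :=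
  le_trans (by omega) <| add_le_sum (fun _ _ => Nat.zero_le _) (mem_filter.2 ⟨mem_univ x, hx⟩)
    (mem_filter.2 ⟨mem_univ y, hy⟩) hxy

theorem exists_eq_vecCons_three {β : Type*} (u : Fin 3 → β) : ∃ x y z, u = ![x, y, z] :=
  ⟨_, _, _, (FinVec.etaExpand_eq u).symm⟩

namespace SierpinskiThree

variable {n : ℕ}

theorem adj_iff {i a b x y z : Fin n} :
    (sierpinskiGraph n 3).Adj ![i, a, b] ![x, y, z] ↔
      (i ≠ x ∧ a = x ∧ b = x ∧ y = i ∧ z = i) ∨ (i = x ∧ a ≠ y ∧ b = y ∧ z = a) ∨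
      (i = x ∧ a = y ∧ b ≠ z) := by
  simp +decide only [sierpinskiGraph, SimpleGraph.fromRel_adj, Fin.exists_fin_succ,
    Fin.forall_fin_succ, IsEmpty.exists_iff, IsEmpty.forall_iff, Fin.succ_zero_eq_one,
    Fin.succ_one_eq_two, true_implies, true_and, and_true, or_false, Matrix.cons_val_zero,
    Matrix.cons_val_one, Matrix.cons_val_two, Matrix.head_cons, Matrix.tail_cons, ne_eq,
    Matrix.vecCons_inj]
  grind

theorem adj_of_ne_third (i a : Fin n) {c c' : Fin n} (h : c ≠ c') :
    (sierpinskiGraph n 3).Adj ![i, a, c] ![i, a, c'] :=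
  adj_iff.2 <| .inr <| .inr ⟨rfl, rfl, h⟩

theorem adj_swap (i : Fin n) {a b : Fin n} (h : a ≠ b) :
    (sierpinskiGraph n 3).Adj ![i, a, b] ![i, b, a] :=
  adj_iff.2 <| .inr <| .inl ⟨rfl, h, rfl, rfl⟩

theorem adj_link {i a : Fin n} (h : i ≠ a) :
    (sierpinskiGraph n 3).Adj ![i, a, a] ![a, i, i] :=
  adj_iff.2 <| .inl ⟨h, rfl, rfl, rfl, rfl⟩

theorem sum_adj_le_of_ne (f : (Fin 3 → Fin n) → ℕ) (i : Fin n) {a b : Fin n} (hba : b ≠ a) :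
    ∑ u ∈ univ.filter (fun u => (sierpinskiGraph n 3).Adj ![i, a, b] u), f u
      ≤ ∑ c, f ![i, a, c] + f ![i, b, a] := by
  have hnot : ![i, b, a] ∉ univ.image fun c => ![i, a, c] := by
    simp only [mem_image, mem_univ, true_and, not_exists]
    exact fun c h => hba (congrFun h 1).symm
  calc _ ≤ ∑ u ∈ insert ![i, b, a] (univ.image fun c => ![i, a, c]), f u := by
        refine sum_le_sum_of_subset fun u hu => ?_
        obtain ⟨x, y, z, rfl⟩ := exists_eq_vecCons_three u
        rcases adj_iff.1 (mem_filter.1 hu).2 with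
          ⟨-, rfl, rfl, -⟩ | ⟨rfl, -, rfl, rfl⟩ | ⟨rfl, rfl, -⟩
        · exact absurd rfl hba
        · exact mem_insert_self _ _
        · exact mem_insert_of_mem (mem_image_of_mem _ (mem_univ z))
    _ = _ := by rw [sum_insert hnot, sum_image fun _ _ _ _ h => congrFun h 2, add_comm]

theorem sum_adj_diag_le (f : (Fin 3 → Fin n) → ℕ) (i : Fin n) :
    ∑ u ∈ univ.filter (fun u => (sierpinskiGraph n 3).Adj ![i, i, i] u), f u
      ≤ ∑ c, f ![i, i, c] := by
  calc _ ≤ ∑ u ∈ univ.image fun c => ![i, i, c], f u := by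
        refine sum_le_sum_of_subset fun u hu => ?_
        obtain ⟨x, y, z, rfl⟩ := exists_eq_vecCons_three u
        rcases adj_iff.1 (mem_filter.1 hu).2 with ⟨hix, rfl, -⟩ | ⟨-, hiy, rfl, -⟩ | ⟨rfl, rfl, -⟩
        · exact absurd rfl hix
        · exact absurd rfl hiy
        · exact mem_image_of_mem _ (mem_univ z)
    _ = _ := sum_image fun _ _ _ _ h => congrFun h 2

theorem two_mul_mul_sub_one_le_sum {f : (Fin 3 → Fin n) → ℕ}
    (hf : IsIDF (sierpinskiGraph n 3) f) : 2 * n * (n - 1) ≤ ∑ v, f v := by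
  have hcopy (i : Fin n) : 2 * (n - 1) ≤ ∑ a, ∑ c, f ![i, a, c] := by
    have hg : IsOffDiagItalian fun a c => f ![i, a, c] := fun a b hba h0 =>
      (hf.2 _ h0).trans (sum_adj_le_of_ne f i hba)
    simpa using hg.two_mul_card_sub_one_le_sum_sum i fun h0 =>
      (hf.2 _ h0).trans (sum_adj_diag_le f i)
  calc 2 * n * (n - 1) = ∑ _i : Fin n, 2 * (n - 1) := by
        rw [sum_const, card_univ, Fintype.card_fin, smul_eq_mul, mul_assoc, mul_left_comm]
    _ ≤ ∑ v, f v := by rw [Fintype.sum_fin_three_arrow]; exact sum_le_sum fun i _ => hcopy i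

def twoColumnWeight (p q : Fin n → Fin n) (u : Fin 3 → Fin n) : ℕ :=
  (if u 2 = p (u 0) then 1 else 0) +
    (if u 2 = q (u 0) ∧ u 1 ≠ p (u 0) ∧ u 1 ≠ q (u 0) then 1 else 0)

theorem isIDF_twoColumnWeight {p q : Fin n → Fin n} (hpq : Function.LeftInverse p q)
    (hne : ∀ i, p i ≠ q i) : IsIDF (sierpinskiGraph n 3) (twoColumnWeight p q) := by
  refine ⟨fun u => by unfold twoColumnWeight; split_ifs <;> omega, fun v hv => ?_⟩
  obtain ⟨i, j, k, rfl⟩ := exists_eq_vecCons_three v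
  have hp (j : Fin n) : 1 ≤ twoColumnWeight p q ![i, j, p i] := by simp [twoColumnWeight]
  have hq (j : Fin n) (hjp : j ≠ p i) (hjq : j ≠ q i) : 1 ≤ twoColumnWeight p q ![i, j, q i] := by
    simp [twoColumnWeight, hjp, hjq]
  obtain ⟨hkp, hkq⟩ : k ≠ p i ∧ ¬(k = q i ∧ j ≠ p i ∧ j ≠ q i) := by
    simp only [twoColumnWeight, Nat.add_eq_zero_iff, ite_eq_right_iff, one_ne_zero, imp_false] at hv
    exact hv
  by_cases hj : j ≠ p i ∧ j ≠ q i
  · exact SimpleGraph.two_le_sum_adj (fun h => hne i (congrFun h 2)) (adj_of_ne_third i j hkp)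
      (adj_of_ne_third i j fun h => hkq ⟨h, hj⟩) (hp j) (hq j hj.1 hj.2)
  by_cases hkj : k = j
  · subst hkj
    obtain rfl : k = q i := by grind
    have hiq : i ≠ q i := fun h => hne i ((congrArg p h).trans ((hpq i).trans h))
    exact SimpleGraph.two_le_sum_adj (fun h => hiq (congrFun h 0))
      (adj_of_ne_third i _ (hne i).symm) (adj_link hiq) (hp _) (by simp [twoColumnWeight, hpq i])
  · have hjk : 1 ≤ twoColumnWeight p q ![i, k, j] := by
      rcases not_and_or.1 hj with hjp | hjq
      · exact not_not.1 hjp ▸ hp k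
      · exact not_not.1 hjq ▸ hq k hkp (not_not.1 hjq ▸ hkj)
    exact SimpleGraph.two_le_sum_adj (fun h => hkj (congrFun h 1).symm) (adj_of_ne_third i j hkp)
      (adj_swap i (Ne.symm hkj)) (hp j) hjk

theorem sum_twoColumnWeight {p q : Fin n → Fin n} (hne : ∀ i, p i ≠ q i) :
    ∑ v, twoColumnWeight p q v = 2 * n * (n - 1) := by
  have hcopy (i : Fin n) : ∑ j, ∑ k, twoColumnWeight p q ![i, j, k] = 2 * (n - 1) := by
    have hrow (j : Fin n) :
        ∑ k, twoColumnWeight p q ![i, j, k] = 1 + if j ≠ p i ∧ j ≠ q i then 1 else 0 := by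
      simp only [twoColumnWeight, Matrix.cons_val_zero, Matrix.cons_val_one,
        Matrix.cons_val_two, Matrix.head_cons, Matrix.tail_cons, sum_add_distrib, ite_and]
      rw [Fintype.sum_ite_eq', Fintype.sum_ite_eq']
    have hrows : ({j | j ≠ p i ∧ j ≠ q i} : Finset (Fin n)) = univ \ {p i, q i} := by
      ext j; simp
    have hcard : #(univ \ {p i, q i}) = n - 2 := by
      rw [card_sdiff_of_subset (subset_univ _), card_pair (hne i), card_univ, Fintype.card_fin]
    have h2 : 2 ≤ n := by simpa [card_pair (hne i)] using card_le_univ {p i, q i}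
    rw [sum_congr rfl fun j _ => hrow j, sum_add_distrib, sum_boole, hrows, hcard, sum_const,
      card_univ, Fintype.card_fin, smul_eq_mul, mul_one, Nat.cast_id]
    omega
  rw [Fintype.sum_fin_three_arrow, sum_congr rfl fun i _ => hcopy i, sum_const, card_univ,
    Fintype.card_fin, smul_eq_mul, mul_assoc, mul_left_comm]

end SierpinskiThree

theorem Fin.exists_leftInverse_forall_ne {n : ℕ} (hn : 3 ≤ n) :
    ∃ p q : Fin n → Fin n, Function.LeftInverse p q ∧ ∀ i, p i ≠ q i := by
  have : NeZero n := ⟨by omega⟩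
  refine ⟨(· - 1), (· + 1), fun i => add_sub_cancel_right i 1, fun i h => ?_⟩
  rw [sub_eq_iff_eq_add, add_assoc, left_eq_add] at h
  have := congrArg Fin.val h
  rw [Fin.val_add, Fin.val_one', Nat.one_mod_eq_one.2 (by omega), Fin.val_zero,
    Nat.mod_eq_of_lt (by omega)] at this
  omega

theorem italianDom_sierpinski_three (n : ℕ) (hn : 3 ≤ n) :
    italianDomNumber (sierpinskiGraph n 3) = 2 * n * (n - 1) := by
  obtain ⟨p, q, hpq, hne⟩ := Fin.exists_leftInverse_forall_ne hn
  have hmem : 2 * n * (n - 1) ∈ {w | ∃ f, IsIDF (sierpinskiGraph n 3) f ∧ ∑ v, f v = w} :=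
    ⟨_, SierpinskiThree.isIDF_twoColumnWeight hpq hne, SierpinskiThree.sum_twoColumnWeight hne⟩
  refine le_antisymm (Nat.sInf_le hmem) (le_csInf ⟨_, hmem⟩ ?_)
  rintro _ ⟨f, hf, rfl⟩
  exact SierpinskiThree.two_mul_mul_sub_one_le_sum hf
end

section
/- For n ≥ 3, every Italian dominating function f of S(K_n, 3) of minimum weight assigns total weight at least 2n − 2 to each of the n copies S_i(K_n, 2) (the subgraphs induced by the vertices whose first letter is v_i), for i = 1,...,n. -/
open Finset
open scoped Classical

lemma vec3_eta {n : ℕ} (w : Fin 3 → Fin n) : w = ![w 0, w 1, w 2] := by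
  funext j; fin_cases j <;> simp

lemma adj_iff {n : ℕ} (u w : Fin 3 → Fin n) :
    (sierpinskiGraph n 3).Adj u w ↔ u ≠ w ∧
      ((u 0 = w 0 ∧ u 1 = w 1) ∨ (u 0 = w 0 ∧ u 1 = w 2 ∧ u 2 = w 1) ∨
        (u 1 = w 0 ∧ u 2 = w 0 ∧ w 1 = u 0 ∧ w 2 = u 0)) := by
  rw [sierpinskiGraph, SimpleGraph.fromRel_adj]
  constructor
  · rintro ⟨hne, h | h⟩ <;> obtain ⟨i, h1, h2, h3⟩ := h <;> refine ⟨hne, ?_⟩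
    · fin_cases i
      · exact Or.inr (Or.inr ⟨(h3 1 (by decide)).1, (h3 2 (by decide)).1,
          (h3 1 (by decide)).2, (h3 2 (by decide)).2⟩)
      · exact Or.inr (Or.inl ⟨h1 0 (by decide), (h3 2 (by decide)).2.symm,
          (h3 2 (by decide)).1⟩)
      · exact Or.inl ⟨h1 0 (by decide), h1 1 (by decide)⟩
    · fin_cases i
      · exact Or.inr (Or.inr ⟨(h3 1 (by decide)).2, (h3 2 (by decide)).2,
          (h3 1 (by decide)).1, (h3 2 (by decide)).1⟩)
      · exact Or.inr (Or.inl ⟨(h1 0 (by decide)).symm, (h3 2 (by decide)).1.symm,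
          (h3 2 (by decide)).2⟩)
      · exact Or.inl ⟨(h1 0 (by decide)).symm, (h1 1 (by decide)).symm⟩
  · rintro ⟨hne, (⟨e0, e1⟩ | ⟨e0, e1, e2⟩ | ⟨e1, e2, e3, e4⟩)⟩ <;> refine ⟨hne, Or.inl ?_⟩
    · refine ⟨2, ?_, ?_, ?_⟩
      · intro j hj; fin_cases j
        · exact e0
        · exact e1
        · exact absurd hj (by decide)
      · intro h2; exact hne (by funext j; fin_cases j <;> assumption)
      · intro j hj; exact absurd hj (by fin_cases j <;> decide)
    · refine ⟨1, ?_, ?_, ?_⟩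
      · intro j hj; fin_cases j
        · exact e0
        · exact absurd hj (by decide)
        · exact absurd hj (by decide)
      · intro h1; exact hne (by
          funext j; fin_cases j
          · exact e0
          · exact h1
          · show u 2 = w 2; rw [e2]; exact h1.symm.trans e1)
      · intro j hj; fin_cases j
        · exact absurd hj (by decide)
        · exact absurd hj (by decide)
        · exact ⟨e2, e1.symm⟩
    · refine ⟨0, ?_, ?_, ?_⟩
      · intro j hj; exact absurd hj (by fin_cases j <;> decide)
      · intro h0; exact hne (by
          funext j; fin_cases j
          · exact h0
          · show u 1 = w 1; rw [e1]; exact (e3.trans h0).symm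
          · show u 2 = w 2; rw [e2]; exact (e4.trans h0).symm)
      · intro j hj; fin_cases j
        · exact absurd hj (by decide)
        · exact ⟨e1, e3⟩
        · exact ⟨e2, e4⟩

lemma sum_fiber {n : ℕ} (f : (Fin 3 → Fin n) → ℕ) (i j : Fin n) :
    ∑ u ∈ univ.filter (fun u => u 0 = i ∧ u 1 = j), f u = ∑ k, f ![i, j, k] := by
  have himg : univ.filter (fun u : Fin 3 → Fin n => u 0 = i ∧ u 1 = j)
      = univ.image (fun k : Fin n => ![i, j, k]) := by
    ext u
    simp only [mem_filter, mem_image, mem_univ, true_and]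
    constructor
    · rintro ⟨h0, h1⟩
      exact ⟨u 2, by rw [← h0, ← h1]; exact (vec3_eta u).symm⟩
    · rintro ⟨k, rfl⟩
      constructor <;> simp
  rw [himg, Finset.sum_image]
  intro a _ b _ h
  have := congrFun h 2
  simpa using this

lemma key {n : ℕ} (f : (Fin 3 → Fin n) → ℕ) (hf : IsIDF (sierpinskiGraph n 3) f)
    (v : Fin 3 → Fin n) (hfv : f v = 0) :
    2 ≤ (∑ k, f ![v 0, v 1, k]) +
      f (if v 2 = v 1 then ![v 1, v 0, v 0] else ![v 0, v 2, v 1]) := by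
  set σ := (if v 2 = v 1 then ![v 1, v 0, v 0] else ![v 0, v 2, v 1]) with hσ
  have hsub : univ.filter (fun u => (sierpinskiGraph n 3).Adj v u) ⊆
      (univ.filter (fun u => u 0 = v 0 ∧ u 1 = v 1)) ∪ {σ} := by
    intro u hu
    simp only [mem_filter, mem_univ, true_and] at hu
    rw [adj_iff] at hu
    obtain ⟨hne, hc⟩ := hu
    rcases hc with ⟨h0, h1⟩ | ⟨h0, h1, h2⟩ | ⟨h1, h2, h3, h4⟩
    · exact mem_union_left _ (mem_filter.mpr ⟨mem_univ _, h0.symm, h1.symm⟩)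
    · refine mem_union_right _ (mem_singleton.mpr ?_)
      by_cases hc : v 2 = v 1
      · exfalso; apply hne
        rw [vec3_eta v, vec3_eta u, ← h0, ← h1, ← h2, hc]
      · rw [hσ, if_neg hc, vec3_eta u, ← h0, ← h1, ← h2]
    · refine mem_union_right _ (mem_singleton.mpr ?_)
      have hc : v 2 = v 1 := h2.trans h1.symm
      rw [hσ, if_pos hc, vec3_eta u, ← h1, h3, h4]
  calc 2 ≤ ∑ u ∈ univ.filter (fun u => (sierpinskiGraph n 3).Adj v u), f u := hf.2 v hfv
    _ ≤ ∑ u ∈ (univ.filter (fun u => u 0 = v 0 ∧ u 1 = v 1)) ∪ {σ}, f u :=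
        Finset.sum_le_sum_of_subset hsub
    _ ≤ (∑ u ∈ univ.filter (fun u => u 0 = v 0 ∧ u 1 = v 1), f u)
          + ∑ u ∈ ({σ} : Finset _), f u := by
        exact le_of_le_of_eq (Nat.le_add_right _ _) Finset.sum_union_inter
    _ = (∑ k, f ![v 0, v 1, k]) + f σ := by rw [sum_fiber, sum_singleton]

lemma key1 {n : ℕ} (f : (Fin 3 → Fin n) → ℕ) (hf : IsIDF (sierpinskiGraph n 3) f)
    (i j k : Fin n) (hkj : k ≠ j) (h0 : f ![i, j, k] = 0) :
    2 ≤ (∑ t, f ![i, j, t]) + f ![i, k, j] := by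
  have := key f hf ![i, j, k] h0
  simpa [hkj] using this

lemma key2 {n : ℕ} (f : (Fin 3 → Fin n) → ℕ) (hf : IsIDF (sierpinskiGraph n 3) f)
    (i j : Fin n) (h0 : f ![i, j, j] = 0) :
    2 ≤ (∑ t, f ![i, j, t]) + f ![j, i, i] := by
  have := key f hf ![i, j, j] h0
  simpa using this

theorem sierpinski_three_copy_weight (n : ℕ) (hn : 3 ≤ n)
    (f : (Fin 3 → Fin n) → ℕ) (hf : IsIDF (sierpinskiGraph n 3) f)
    (hmin : (∑ w, f w) = italianDomNumber (sierpinskiGraph n 3)) :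
    ∀ i : Fin n,
      2 * n - 2 ≤ ∑ w ∈ Finset.univ.filter fun w : Fin 3 → Fin n => w 0 = i, f w := by
  intro i
  have hcopy : (∑ w ∈ Finset.univ.filter fun w : Fin 3 → Fin n => w 0 = i, f w)
      = ∑ j, ∑ k, f ![i, j, k] := by
    rw [← Finset.sum_fiberwise_of_maps_to (g := fun w : Fin 3 → Fin n => w 1)
      (fun _ _ => mem_univ _) f]
    exact Finset.sum_congr rfl fun j _ => by rw [Finset.filter_filter, sum_fiber]
  rw [hcopy]
  clear hcopy hmin
  have hAle : ∀ j k : Fin n, f ![i, j, k] ≤ ∑ t, f ![i, j, t] := fun j k =>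
    Finset.single_le_sum (f := fun t => f ![i, j, t]) (fun _ _ => Nat.zero_le _) (mem_univ k)
  by_cases hzero : ∃ j0, (∑ k, f ![i, j0, k]) = 0
  · obtain ⟨j0, hj0⟩ := hzero
    have hk2 : ∀ k, k ≠ j0 → 2 ≤ ∑ t, f ![i, k, t] := by
      intro k hk
      have h0 : f ![i, j0, k] = 0 := by have := hAle j0 k; omega
      have hkey := key1 f hf i j0 k hk h0
      have := hAle k j0
      omega
    have hsum : ∑ j ∈ univ.erase j0, (2 : ℕ) ≤ ∑ j ∈ univ.erase j0, (∑ t, f ![i, j, t]) :=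
      Finset.sum_le_sum fun j hj => hk2 j (Finset.mem_erase.mp hj).1
    have hsub : ∑ j ∈ univ.erase j0, (∑ t, f ![i, j, t]) ≤ ∑ j, ∑ t, f ![i, j, t] :=
      Finset.sum_le_sum_of_subset (Finset.subset_univ _)
    have hcard : (univ.erase j0).card = n - 1 := by
      rw [Finset.card_erase_of_mem (mem_univ _), Finset.card_univ, Fintype.card_fin]
    rw [Finset.sum_const, hcard, smul_eq_mul] at hsum
    omega
  · push_neg at hzero
    have h1le : ∀ j, 1 ≤ ∑ k, f ![i, j, k] := fun j => Nat.one_le_iff_ne_zero.mpr (hzero j)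
    set S1 : Finset (Fin n) := univ.filter (fun j => (∑ k, f ![i, j, k]) = 1) with hS1def
    have hmemS1 : ∀ j, j ∈ S1 ↔ (∑ k, f ![i, j, k]) = 1 := fun j => by simp [hS1def]
    have hcount : 2 * n ≤ (∑ j, ∑ k, f ![i, j, k]) + S1.card := by
      have hptw : ∀ j : Fin n,
          2 ≤ (∑ k, f ![i, j, k]) + (if (∑ k, f ![i, j, k]) = 1 then 1 else 0) := by
        intro j
        have := h1le j
        by_cases h : (∑ k, f ![i, j, k]) = 1 <;> simp [h] <;> omega
      have hite : (∑ j : Fin n, if (∑ k, f ![i, j, k]) = 1 then (1 : ℕ) else 0) = S1.card := by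
        simp [hS1def]
      calc 2 * n = ∑ _j : Fin n, 2 := by
            rw [Finset.sum_const, Finset.card_univ, Fintype.card_fin]; ring
        _ ≤ ∑ j, ((∑ k, f ![i, j, k]) + (if (∑ k, f ![i, j, k]) = 1 then 1 else 0)) :=
            Finset.sum_le_sum fun j _ => hptw j
        _ = (∑ j, ∑ k, f ![i, j, k]) + S1.card := by rw [Finset.sum_add_distrib, hite]
    by_cases hS : S1.card ≤ 2
    · omega
    · push_neg at hS
      have hex : ∀ j : Fin n, ∃ t, (∑ k, f ![i, j, k]) = 1 →
          (1 ≤ f ![i, j, t] ∧ ∀ k, k ≠ t → f ![i, j, k] = 0) := by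
        intro j
        by_cases h : (∑ k, f ![i, j, k]) = 1
        · have het : ∃ t, 1 ≤ f ![i, j, t] := by
            by_contra hc; push_neg at hc
            have : (∑ k, f ![i, j, k]) = 0 :=
              Finset.sum_eq_zero fun k _ => by have := hc k; omega
            omega
          obtain ⟨t, ht⟩ := het
          refine ⟨t, fun _ => ⟨ht, fun k hkt => ?_⟩⟩
          have hpair : f ![i, j, k] + f ![i, j, t] ≤ ∑ x, f ![i, j, x] := by
            have h2 := Finset.sum_le_sum_of_subset (f := fun x => f ![i, j, x])
              (Finset.subset_univ ({k, t} : Finset (Fin n)))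
            rwa [Finset.sum_pair hkt] at h2
          omega
        · exact ⟨j, fun hc => absurd hc h⟩
      choose m hm using hex
      have L2 : ∀ j k, (∑ t, f ![i, j, t]) = 1 → k ≠ j → k ≠ m j → 1 ≤ f ![i, k, j] := by
        intro j k h1 hkj hkm
        have h0 : f ![i, j, k] = 0 := (hm j h1).2 k hkm
        have := key1 f hf i j k hkj h0
        omega
      have L2' : ∀ j k, (∑ t, f ![i, j, t]) = 1 → (∑ t, f ![i, k, t]) = 1 →
          k ≠ j → k ≠ m j → m k = j := by
        intro j k h1 hk1 hkj hkm
        by_contra hne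
        have h0 : f ![i, k, j] = 0 := (hm k hk1).2 j (fun h => hne h.symm)
        have := L2 j k h1 hkj hkm
        omega
      have hiS : (∑ k, f ![i, i, k]) ≠ 1 := by
        intro h1
        have hmi : m i = i := by
          by_contra hne
          have h0 : f ![i, i, i] = 0 := (hm i h1).2 i (fun h => hne h.symm)
          have := key2 f hf i i h0
          rw [h1, h0] at this
          omega
        obtain ⟨a, ha, b, hb, hab⟩ := Finset.one_lt_card.mp (show 1 < (S1.erase i).card by
          have := Finset.pred_card_le_card_erase (s := S1) (a := i); omega)
        have haS := (hmemS1 a).mp (Finset.mem_of_mem_erase ha)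
        have hbS := (hmemS1 b).mp (Finset.mem_of_mem_erase hb)
        have hai : a ≠ i := (Finset.mem_erase.mp ha).1
        have hbi : b ≠ i := (Finset.mem_erase.mp hb).1
        have hma : m a = i := L2' i a h1 haS hai (fun h => hai (h.trans hmi))
        have hmb : m b = i := L2' i b h1 hbS hbi (fun h => hbi (h.trans hmi))
        have hba : m b = a := L2' a b haS hbS hab.symm (fun h => hbi (h.trans hma))
        exact hai (hba.symm.trans hmb)
      have hS3 : S1.card = 3 := by
        by_contra hc
        obtain ⟨j, hj⟩ := Finset.card_pos.mp (show 0 < S1.card by omega)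
        have hjS := (hmemS1 j).mp hj
        have hcard2 : 1 < ((S1.erase j).erase (m j)).card := by
          have h1 := Finset.pred_card_le_card_erase (s := S1) (a := j)
          have h2 := Finset.pred_card_le_card_erase (s := S1.erase j) (a := m j)
          omega
        obtain ⟨k1, hk1, k2, hk2, hk12⟩ := Finset.one_lt_card.mp hcard2
        have hk1S := (hmemS1 k1).mp (Finset.mem_of_mem_erase (Finset.mem_of_mem_erase hk1))
        have hk2S := (hmemS1 k2).mp (Finset.mem_of_mem_erase (Finset.mem_of_mem_erase hk2))
        have hk1j : k1 ≠ j := (Finset.mem_erase.mp (Finset.mem_of_mem_erase hk1)).1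
        have hk1m : k1 ≠ m j := (Finset.mem_erase.mp hk1).1
        have hk2j : k2 ≠ j := (Finset.mem_erase.mp (Finset.mem_of_mem_erase hk2)).1
        have hk2m : k2 ≠ m j := (Finset.mem_erase.mp hk2).1
        have hm1 : m k1 = j := L2' j k1 hjS hk1S hk1j hk1m
        have hm2 : m k2 = k1 := L2' k1 k2 hk1S hk2S hk12.symm (fun h => hk2j (h.trans hm1))
        have hm2' : m k2 = j := L2' j k2 hjS hk2S hk2j hk2m
        exact hk1j (hm2.symm.trans hm2')
      have hmS : ∀ a ∈ S1, m a ∈ S1 := by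
        intro a haS'
        have haS := (hmemS1 a).mp haS'
        by_contra hma
        obtain ⟨b, hb, c, hc, hbc⟩ := Finset.one_lt_card.mp (show 1 < (S1.erase a).card by
          have := Finset.pred_card_le_card_erase (s := S1) (a := a); omega)
        have hbS := (hmemS1 b).mp (Finset.mem_of_mem_erase hb)
        have hcS := (hmemS1 c).mp (Finset.mem_of_mem_erase hc)
        have hba : b ≠ a := (Finset.mem_erase.mp hb).1
        have hca : c ≠ a := (Finset.mem_erase.mp hc).1
        have hbma : b ≠ m a := fun h => hma (h ▸ Finset.mem_of_mem_erase hb)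
        have hcma : c ≠ m a := fun h => hma (h ▸ Finset.mem_of_mem_erase hc)
        have h1 : m b = a := L2' a b haS hbS hba hbma
        have h2 : m c = a := L2' a c haS hcS hca hcma
        have h3 : m c = b := L2' b c hbS hcS hbc.symm (fun h => hca (h.trans h1))
        exact hba (h3.symm.trans h2)
      have hk3 : ∀ k, (∑ t, f ![i, k, t]) ≠ 1 → 3 ≤ ∑ t, f ![i, k, t] := by
        intro k hk
        have hone : ∀ j ∈ S1, 1 ≤ f ![i, k, j] := by
          intro j hj
          have hjS := (hmemS1 j).mp hj
          have hkj : k ≠ j := fun h => hk (h ▸ hjS)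
          have hkm : k ≠ m j := fun h => hk (h ▸ (hmemS1 (m j)).mp (hmS j hj))
          exact L2 j k hjS hkj hkm
        calc (3 : ℕ) = ∑ _j ∈ S1, 1 := by rw [Finset.sum_const, hS3, smul_eq_mul]
          _ ≤ ∑ j ∈ S1, f ![i, k, j] := Finset.sum_le_sum hone
          _ ≤ ∑ j, f ![i, k, j] := Finset.sum_le_sum_of_subset (Finset.subset_univ _)
      have hn4 : 4 ≤ n := by
        have hsub : S1 ⊆ univ.erase i := fun j hj =>
          Finset.mem_erase.mpr ⟨fun h => hiS (h ▸ (hmemS1 j).mp hj), mem_univ _⟩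
        have hle := Finset.card_le_card hsub
        rw [Finset.card_erase_of_mem (mem_univ _), Finset.card_univ, Fintype.card_fin] at hle
        omega
      have hs1 : (∑ j ∈ S1, (∑ k, f ![i, j, k])) = 3 := by
        rw [Finset.sum_congr rfl (fun j hj => (hmemS1 j).mp hj), Finset.sum_const, hS3,
          smul_eq_mul]
      have hcompl_card :
          (univ.filter (fun j => ¬((∑ k, f ![i, j, k]) = 1))).card = n - 3 := by
        have hpc := Finset.card_filter_add_card_filter_not
          (s := (univ : Finset (Fin n))) (p := fun j => (∑ k, f ![i, j, k]) = 1)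
        rw [Finset.card_univ, Fintype.card_fin, ← hS1def] at hpc
        omega
      have hs2 : 3 * (n - 3) ≤
          ∑ j ∈ univ.filter (fun j => ¬((∑ k, f ![i, j, k]) = 1)), (∑ k, f ![i, j, k]) := by
        calc 3 * (n - 3)
            = ∑ _j ∈ univ.filter (fun j => ¬((∑ k, f ![i, j, k]) = 1)), 3 := by
              rw [Finset.sum_const, hcompl_card, smul_eq_mul, Nat.mul_comm]
          _ ≤ _ := Finset.sum_le_sum fun j hj => hk3 j (Finset.mem_filter.mp hj).2
      have hsplit : (∑ j ∈ S1, (∑ k, f ![i, j, k]))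
          + (∑ j ∈ univ.filter (fun j => ¬((∑ k, f ![i, j, k]) = 1)), (∑ k, f ![i, j, k]))
          = ∑ j, ∑ k, f ![i, j, k] := by
        rw [hS1def]
        exact Finset.sum_filter_add_sum_filter_not univ _ _
      omega
end

section
/- For every path P_n on n ≥ 1 vertices, the perfect Italian domination number of P_n equals ⌈(n+1)/2⌉. -/
open Finset
open scoped Classical

/-! ### Auxiliary machinery for the path-graph theorem -/

/-- Extension of a function on `Fin n` to `ℕ` by zero. -/
def gfAux (n : ℕ) (f : Fin n → ℕ) (j : ℕ) : ℕ := if h : j < n then f ⟨j, h⟩ else 0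

lemma nbrSumAux (n : ℕ) (f : Fin n → ℕ) (k : ℕ) (hk : k < n) :
    ∑ u ∈ Finset.univ.filter (fun u => (SimpleGraph.pathGraph n).Adj ⟨k, hk⟩ u), f u
    = (if k = 0 then 0 else gfAux n f (k-1)) + gfAux n f (k+1) := by
  rw [Finset.sum_filter]
  have h1 : ∀ u : Fin n, (if (SimpleGraph.pathGraph n).Adj ⟨k, hk⟩ u then f u else 0)
      = (if k + 1 = (u:ℕ) then gfAux n f (u:ℕ) else 0)
        + (if (u:ℕ) + 1 = k then gfAux n f (u:ℕ) else 0) := by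
    intro u
    rw [SimpleGraph.pathGraph_adj]
    have hu : gfAux n f (u:ℕ) = f u := by simp [gfAux, u.2]
    by_cases h1 : k + 1 = (u:ℕ) <;> by_cases h2 : (u:ℕ) + 1 = k
    · exfalso; omega
    · simp [h1, h2, hu]
    · simp [h1, h2, hu]
    · simp [h1, h2]
  simp only [h1]
  rw [Finset.sum_add_distrib]
  have e1 : ∑ u : Fin n, (if k + 1 = (u:ℕ) then gfAux n f (u:ℕ) else 0)
      = ∑ j ∈ Finset.range n, (if k + 1 = j then gfAux n f j else 0) :=
    Fin.sum_univ_eq_sum_range (fun j => if k + 1 = j then gfAux n f j else 0) n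
  have e2 : ∑ u : Fin n, (if (u:ℕ) + 1 = k then gfAux n f (u:ℕ) else 0)
      = ∑ j ∈ Finset.range n, (if j + 1 = k then gfAux n f j else 0) :=
    Fin.sum_univ_eq_sum_range (fun j => if j + 1 = k then gfAux n f j else 0) n
  rw [e1, e2, Finset.sum_ite_eq]
  have h2 : ∑ j ∈ Finset.range n, (if j + 1 = k then gfAux n f j else 0)
      = (if k = 0 then 0 else gfAux n f (k-1)) := by
    by_cases hk0 : k = 0
    · simp [hk0]
    · rw [if_neg hk0]
      have : ∀ j ∈ Finset.range n, (if j + 1 = k then gfAux n f j else 0)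
          = (if j = k - 1 then gfAux n f j else 0) := by
        intro j _
        exact if_congr (by omega) rfl rfl
      rw [Finset.sum_congr rfl this, Finset.sum_ite_eq']
      rw [if_pos (Finset.mem_range.2 (by omega))]
  rw [h2]
  have h3 : (if k + 1 ∈ Finset.range n then gfAux n f (k+1) else 0) = gfAux n f (k+1) := by
    by_cases h : k + 1 < n
    · simp [Finset.mem_range, h]
    · simp [Finset.mem_range, h, gfAux]
  rw [h3, Nat.add_comm]

lemma seqLowerAux (n : ℕ) (hn : 1 ≤ n) (g : ℕ → ℕ)
    (hgn : ∀ k, n ≤ k → g k = 0)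
    (hz : ∀ k, k < n → g k = 0 → g (k-1) + g (k+1) = 2) :
    n + 1 ≤ 2 * ∑ k ∈ Finset.range n, g k := by
  obtain ⟨m, rfl⟩ : ∃ m, n = m + 1 := ⟨n - 1, by omega⟩
  set w := ∑ k ∈ Finset.range (m+1), g k with hw
  set T := ∑ k ∈ Finset.range (m+1), (g (k-1) + g (k+1)) with hT
  have hA : ∑ k ∈ Finset.range (m+1), g (k+1) + g 0 = w + g (m+1) := by
    rw [hw, ← Finset.sum_range_succ' g (m+1), Finset.sum_range_succ]
  have hB : ∑ k ∈ Finset.range (m+1), g (k-1) = w - g m + g 0 := by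
    have : ∑ k ∈ Finset.range (m+1), g (k-1)
        = ∑ k ∈ Finset.range m, g k + g 0 := by
      rw [Finset.sum_range_succ' (fun k => g (k-1)) m]
      simp
    rw [this, hw, Finset.sum_range_succ]
    omega
  have hgm1 : g (m+1) = 0 := hgn _ (le_refl _)
  have hwm : g m ≤ w := by
    rw [hw]
    exact Finset.single_le_sum (fun i _ => Nat.zero_le _) (Finset.self_mem_range_succ m)
  have hTw : T + g m = 2 * w := by
    rw [hT, Finset.sum_add_distrib]
    omega
  set P := (Finset.range (m+1)).filter (fun k => g k ≠ 0) with hP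
  set Z := (Finset.range (m+1)).filter (fun k => g k = 0) with hZ
  have hZP : Z.card + P.card = m + 1 := by
    rw [hZ, hP]
    rw [Finset.card_filter_add_card_filter_not]
    exact Finset.card_range (m+1)
  have hPw : P.card ≤ w := by
    calc P.card = ∑ x ∈ P, 1 := Finset.card_eq_sum_ones P
    _ ≤ ∑ k ∈ P, g k := Finset.sum_le_sum (fun k hk => by
        have := (Finset.mem_filter.1 hk).2; omega)
    _ ≤ w := Finset.sum_le_sum_of_subset (Finset.filter_subset _ _)
  have hTZ : 2 * Z.card ≤ T := by
    calc 2 * Z.card = ∑ x ∈ Z, 2 := by rw [Finset.sum_const, smul_eq_mul]; ring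
    _ = ∑ k ∈ Z, (g (k-1) + g (k+1)) := Finset.sum_congr rfl (fun k hk => by
        have h1 := Finset.mem_filter.1 hk
        exact (hz k (Finset.mem_range.1 h1.1) h1.2).symm)
    _ ≤ T := Finset.sum_le_sum_of_subset (Finset.filter_subset _ _)
  by_cases hgm : g m = 0
  · have h2 := hz m (by omega) hgm
    rw [hgm1] at h2
    rcases Nat.eq_zero_or_pos m with hm0 | hm1
    · subst hm0; simp [hgm] at h2
    · have hm2 : g (m-1) = 2 := by omega
      have hmem : m - 1 ∈ P := by
        rw [hP, Finset.mem_filter, Finset.mem_range]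
        exact ⟨by omega, by omega⟩
      have hPw' : P.card + 1 ≤ w := by
        have h3 : ∑ k ∈ P.erase (m-1), g k + g (m-1) = ∑ k ∈ P, g k :=
          Finset.sum_erase_add P g hmem
        have h4 : (P.erase (m-1)).card ≤ ∑ k ∈ P.erase (m-1), g k := by
          calc (P.erase (m-1)).card = ∑ x ∈ P.erase (m-1), 1 :=
              Finset.card_eq_sum_ones _
          _ ≤ _ := Finset.sum_le_sum (fun k hk => by
              have := (Finset.mem_filter.1 (Finset.mem_of_mem_erase hk)).2; omega)
        have h5 : (P.erase (m-1)).card = P.card - 1 := Finset.card_erase_of_mem hmem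
        have h6 : ∑ k ∈ P, g k ≤ w := Finset.sum_le_sum_of_subset (Finset.filter_subset _ _)
        have h7 : 1 ≤ P.card := Finset.card_pos.2 ⟨_, hmem⟩
        omega
      omega
  · omega

/-- The optimal PIDF on the path. -/
def pfAux (n : ℕ) : Fin n → ℕ := fun v => if (v:ℕ) % 2 = 0 ∨ (v:ℕ) = n - 1 then 1 else 0

lemma paritySumAux (m : ℕ) :
    ∑ k ∈ Finset.range m, (if k % 2 = 0 then 1 else 0) = (m+1)/2 := by
  induction m with
  | zero => simp
  | succ m ih =>
    rw [Finset.sum_range_succ, ih]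
    by_cases h : m % 2 = 0 <;> simp [h] <;> omega

lemma pfWeightAux (n : ℕ) (hn : 1 ≤ n) : ∑ v, pfAux n v = (n+2)/2 := by
  have h : ∑ v : Fin n, pfAux n v
      = ∑ k ∈ Finset.range n, (if k % 2 = 0 ∨ k = n - 1 then 1 else 0) :=
    Fin.sum_univ_eq_sum_range (fun k => if k % 2 = 0 ∨ k = n - 1 then 1 else 0) n
  rw [h]
  obtain ⟨m, rfl⟩ : ∃ m, n = m + 1 := ⟨n - 1, by omega⟩
  rw [Finset.sum_range_succ]
  have h1 : ∀ k ∈ Finset.range m, (if k % 2 = 0 ∨ k = m + 1 - 1 then (1:ℕ) else 0)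
      = (if k % 2 = 0 then 1 else 0) := by
    intro k hk
    have := Finset.mem_range.1 hk
    exact if_congr (by omega) rfl rfl
  rw [Finset.sum_congr rfl h1, paritySumAux]
  simp only [Nat.add_sub_cancel, or_true, if_true]
  omega

lemma pfIsPIDF (n : ℕ) (hn : 1 ≤ n) : IsPIDF (SimpleGraph.pathGraph n) (pfAux n) := by
  constructor
  · intro v
    unfold pfAux
    split <;> omega
  · rintro ⟨k, hk⟩ hv
    have hk2 : ¬ (k % 2 = 0) ∧ k ≠ n - 1 := by
      by_contra h
      unfold pfAux at hv
      simp only at hv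
      rcases Decidable.not_and_iff_or_not.1 h with h' | h'
      · rw [if_pos (Or.inl (by omega))] at hv; omega
      · rw [if_pos (Or.inr (by omega))] at hv; omega
    rw [nbrSumAux n (pfAux n) k hk]
    have hk0 : k ≠ 0 := by omega
    have hkm : k - 1 < n := by omega
    have hkp : k + 1 < n := by omega
    rw [if_neg hk0]
    unfold gfAux
    rw [dif_pos hkm, dif_pos hkp]
    unfold pfAux
    simp only
    rw [if_pos (Or.inl (by omega)), if_pos (Or.inl (by omega))]

theorem perfectItalianDom_path (n : ℕ) (hn : 1 ≤ n) :
    perfectItalianDomNumber (SimpleGraph.pathGraph n) = (n + 2) / 2 := by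
  unfold perfectItalianDomNumber
  have hmem : (n + 2) / 2 ∈ {w | ∃ f, IsPIDF (SimpleGraph.pathGraph n) f ∧ ∑ v, f v = w} :=
    ⟨pfAux n, pfIsPIDF n hn, pfWeightAux n hn⟩
  have hlb : ∀ w ∈ {w | ∃ f, IsPIDF (SimpleGraph.pathGraph n) f ∧ ∑ v, f v = w},
      (n + 2) / 2 ≤ w := by
    rintro w ⟨f, ⟨hf2, hfz⟩, hfw⟩
    set g := gfAux n f with hg
    have hsum : ∑ k ∈ Finset.range n, g k = w := by
      rw [← hfw]
      have h1 : ∑ v : Fin n, g (v:ℕ) = ∑ k ∈ Finset.range n, g k :=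
        Fin.sum_univ_eq_sum_range g n
      rw [← h1]
      exact Finset.sum_congr rfl (fun v _ => by simp [hg, gfAux, v.2])
    have key := seqLowerAux n hn g
      (fun k hk => by simp [hg, gfAux, Nat.not_lt.2 hk])
      (fun k hk hk0 => by
        have hfk : f ⟨k, hk⟩ = 0 := by
          have : g k = f ⟨k, hk⟩ := by simp [hg, gfAux, hk]
          omega
        have h2 := hfz ⟨k, hk⟩ hfk
        rw [nbrSumAux n f k hk] at h2
        by_cases hk' : k = 0
        · rw [if_pos hk'] at h2
          subst hk'
          rw [← hg] at h2
          simpa [hk0] using h2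
        · rw [if_neg hk'] at h2
          exact h2)
    rw [hsum] at key
    omega
  exact le_antisymm (Nat.sInf_le hmem) (le_csInf ⟨_, hmem⟩ hlb)
end

section
/- For n ≥ 3, the function f on S(K_n, 2) defined by f(v_iv_i) = 1 and f(v_iv_1) = 1 for all i = 1,...,n (with v_1v_1 counted once), and f(v) = 0 otherwise, is a perfect Italian dominating function of S(K_n, 2) of weight 2n − 1. -/
open Finset
open scoped Classical

lemma sierpinski_adj {n : ℕ} (u v : Fin 2 → Fin n) :
    (sierpinskiGraph n 2).Adj u v ↔
      (u 0 = v 0 ∧ u 1 ≠ v 1) ∨ (u 0 ≠ v 0 ∧ u 1 = v 0 ∧ v 1 = u 0) := by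
  rw [sierpinskiGraph, SimpleGraph.fromRel_adj]
  constructor
  · rintro ⟨hne, ⟨i, h1, h2, h3⟩ | ⟨i, h1, h2, h3⟩⟩
    · fin_cases i
      · exact Or.inr ⟨h2, (h3 1 (by decide)).1, (h3 1 (by decide)).2⟩
      · exact Or.inl ⟨h1 0 (by decide), h2⟩
    · fin_cases i
      · exact Or.inr ⟨fun h => h2 h.symm, (h3 1 (by decide)).2, (h3 1 (by decide)).1⟩
      · exact Or.inl ⟨(h1 0 (by decide)).symm, fun h => h2 h.symm⟩
  · rintro (⟨h1, h2⟩ | ⟨h1, h2, h3⟩)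
    · refine ⟨fun he => h2 (congrFun he 1), Or.inl ⟨1, ?_, h2, ?_⟩⟩
      · intro j hj
        fin_cases j
        · exact h1
        · exact absurd hj (by decide)
      · intro j hj
        exact absurd hj (by fin_cases j <;> decide)
    · refine ⟨fun he => h1 (congrFun he 0), Or.inl ⟨0, ?_, h1, ?_⟩⟩
      · intro j hj; exact absurd hj (by fin_cases j <;> decide)
      · intro j hj
        fin_cases j
        · exact absurd hj (by decide)
        · exact ⟨h2, h3⟩

lemma eq_pair_iff {n : ℕ} (u : Fin 2 → Fin n) (x y : Fin n) :
    u = ![x, y] ↔ u 0 = x ∧ u 1 = y := by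
  constructor
  · rintro rfl; simp
  · rintro ⟨h0, h1⟩; funext j; fin_cases j <;> simpa

theorem sierpinski_two_explicit_PIDF (n : ℕ) (hn : 3 ≤ n) :
    ∃ f : (Fin 2 → Fin n) → ℕ,
      (∀ w : Fin 2 → Fin n,
        f w = if w 1 = w 0 ∨ w 1 = (⟨0, by omega⟩ : Fin n) then 1 else 0) ∧
      IsPIDF (sierpinskiGraph n 2) f ∧
      (∑ w, f w) = 2 * n - 1 := by
  have hz : 0 < n := by omega
  refine ⟨fun w => if w 1 = w 0 ∨ w 1 = (⟨0, hz⟩ : Fin n) then 1 else 0,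
    fun w => rfl, ⟨fun v => by dsimp only; split <;> omega, fun v hv => ?_⟩, ?_⟩
  · -- PIDF condition
    set z : Fin n := ⟨0, hz⟩ with hzdef
    have hcond : ¬(v 1 = v 0 ∨ v 1 = z) := by intro h; simp [h] at hv
    obtain ⟨hvv, hv0⟩ := not_or.mp hcond
    rw [← Finset.sum_filter_ne_zero]
    by_cases h0 : v 0 = z
    · have hset : ((univ.filter fun u => (sierpinskiGraph n 2).Adj v u).filter
          fun u => (if u 1 = u 0 ∨ u 1 = z then 1 else 0) ≠ 0)
          = {![z, z], ![v 1, z]} := by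
        ext u
        simp only [mem_filter, mem_univ, true_and, mem_insert, mem_singleton,
          eq_pair_iff, sierpinski_adj, ne_eq, ite_eq_right_iff, one_ne_zero,
          imp_false, not_not]
        constructor
        · rintro ⟨hadj, hf⟩
          rcases hadj with ⟨he0, hne1⟩ | ⟨hne0, he1, he2⟩
          · rcases hf with h | h
            · exact Or.inl ⟨by rw [← he0]; exact h0, by rw [h, ← he0]; exact h0⟩
            · exact Or.inl ⟨by rw [← he0, h0], h⟩
          · rcases hf with h | h
            · exact absurd (he1 ▸ h ▸ he2 : v 1 = v 0) hvv
            · exact Or.inr ⟨he1.symm, h⟩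
        · rintro (⟨hu0, hu1⟩ | ⟨hu0, hu1⟩)
          · exact ⟨Or.inl ⟨h0 ▸ hu0.symm, fun he => hv0 (he.trans hu1)⟩,
              Or.inl (hu1.trans hu0.symm)⟩
          · refine ⟨Or.inr ⟨?_, hu0.symm, hu1.trans h0.symm⟩, Or.inr hu1⟩
            rw [h0, hu0]; exact fun he => hv0 he.symm
      rw [hset]
      have hne : (![z, z] : Fin 2 → Fin n) ≠ ![v 1, z] := by
        intro h
        have := congrFun h 0
        simp at this
        exact hv0 this.symm
      rw [Finset.sum_pair hne]
      simp
    · have hset : ((univ.filter fun u => (sierpinskiGraph n 2).Adj v u).filter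
          fun u => (if u 1 = u 0 ∨ u 1 = z then 1 else 0) ≠ 0)
          = {![v 0, v 0], ![v 0, z]} := by
        ext u
        simp only [mem_filter, mem_univ, true_and, mem_insert, mem_singleton,
          eq_pair_iff, sierpinski_adj, ne_eq, ite_eq_right_iff, one_ne_zero,
          imp_false, not_not]
        constructor
        · rintro ⟨hadj, hf⟩
          rcases hadj with ⟨he0, hne1⟩ | ⟨hne0, he1, he2⟩
          · rcases hf with h | h
            · exact Or.inl ⟨he0.symm, h.trans he0.symm⟩
            · exact Or.inr ⟨he0.symm, h⟩
          · rcases hf with h | h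
            · exact absurd (he1 ▸ h ▸ he2 : v 1 = v 0) hvv
            · exact absurd (he2 ▸ h : v 0 = z) h0
        · rintro (⟨hu0, hu1⟩ | ⟨hu0, hu1⟩)
          · exact ⟨Or.inl ⟨hu0.symm, fun he => hvv (he.trans hu1)⟩,
              Or.inl (hu1.trans hu0.symm)⟩
          · exact ⟨Or.inl ⟨hu0.symm, fun he => hv0 (he.trans hu1)⟩, Or.inr hu1⟩
      rw [hset]
      have hne : (![v 0, v 0] : Fin 2 → Fin n) ≠ ![v 0, z] := by
        intro h
        have := congrFun h 1
        simp at this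
        exact h0 this
      rw [Finset.sum_pair hne]
      simp
  · -- total weight
    set z : Fin n := ⟨0, hz⟩ with hzdef
    have hsum : ∑ w : Fin 2 → Fin n, (if w 1 = w 0 ∨ w 1 = z then 1 else 0)
        = ∑ p : Fin n × Fin n, (if p.2 = p.1 ∨ p.2 = z then 1 else 0) :=
      Fintype.sum_equiv (finTwoArrowEquiv (Fin n)) _ _ (fun w => by simp [finTwoArrowEquiv])
    rw [hsum, Fintype.sum_prod_type]
    have inner : ∀ a : Fin n, (∑ b : Fin n, if b = a ∨ b = z then 1 else 0)
        = (if a = z then 1 else 2) := by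
      intro a
      have : (∑ b : Fin n, if b = a ∨ b = z then 1 else 0)
          = (∑ b : Fin n, if b ∈ ({a, z} : Finset (Fin n)) then 1 else 0) := by
        simp [Finset.mem_insert]
      rw [this, Finset.sum_ite_mem, Finset.univ_inter, Finset.sum_const, smul_eq_mul, mul_one]
      by_cases h : a = z
      · simp [h]
      · rw [Finset.card_insert_of_notMem (by simp [h]), Finset.card_singleton, if_neg h]
    simp only [inner]
    have h1 : (∑ a : Fin n, (if a = z then 1 else 0)) = 1 := by
      simp [Finset.sum_ite_eq']
    have key : (∑ a : Fin n, (if a = z then 1 else 2)) + 1 = 2 * n := by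
      calc (∑ a : Fin n, (if a = z then 1 else 2)) + 1
          = (∑ a : Fin n, (if a = z then 1 else 2))
            + ∑ a : Fin n, (if a = z then 1 else 0) := by rw [h1]
        _ = ∑ a : Fin n, ((if a = z then 1 else 2) + (if a = z then 1 else 0)) :=
            Finset.sum_add_distrib.symm
        _ = ∑ a : Fin n, 2 := by
            apply Finset.sum_congr rfl
            intro a _
            by_cases hc : a = z <;> simp [hc]
        _ = 2 * n := by
            rw [Finset.sum_const, Finset.card_univ, Fintype.card_fin, smul_eq_mul, mul_comm]
    exact Nat.eq_sub_of_add_eq key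
end
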